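/- arXiv:2512.21839 — 11 statements merged into one kernel-verified Lean document; each statement's English description precedes it below -/
import Mathlib

section
/- Inside the fraction field F of the polynomial ring K[a,b,c], the intersection of the K-subalgebra generated by {a, a⁻¹, b, ac−b} with the K-subalgebra generated by {c, c⁻¹, b, ac−b} equals the K-subalgebra generated by {a, b, c} (i.e., the image of K[a,b,c] in F). -/
/-!
Since `c = a⁻¹ ((ac - b) + b)`, the first algebra is `K[a, b, c][a⁻¹]` and likewise the second
is `K[a, b, c][c⁻¹]`. An element of both is `p / aⁿ = q / cᵐ` with polynomials `p, q`, so
`cᵐ p = aⁿ q`; as `a` is a prime of `K[a, b, c]` not dividing `c`, `aⁿ ∣ p` and the element is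
a polynomial.
-/

open MvPolynomial

theorem Subalgebra.exists_pow_mul_mem_of_mem_adjoin_insert {R A : Type*} [CommSemiring R]
    [CommSemiring A] [Algebra R A] {S : Subalgebra R A} {u v : A} (hu : u ∈ S) (huv : u * v = 1)
    {t : Set A} (ht : t ⊆ S) {x : A} (hx : x ∈ Algebra.adjoin R (insert v t)) :
    ∃ n : ℕ, u ^ n * x ∈ S := by
  induction hx using Algebra.adjoin_induction with
  | mem y hy =>
    rcases hy with rfl | hy
    · exact ⟨1, by rw [pow_one, huv]; exact one_mem S⟩
    · exact ⟨0, by rw [pow_zero, one_mul]; exact ht hy⟩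
  | algebraMap r => exact ⟨0, by rw [pow_zero, one_mul]; exact S.algebraMap_mem r⟩
  | add y z _ _ hy hz =>
    obtain ⟨n, hn⟩ := hy
    obtain ⟨m, hm⟩ := hz
    refine ⟨n + m, ?_⟩
    rw [show u ^ (n + m) * (y + z) = u ^ m * (u ^ n * y) + u ^ n * (u ^ m * z) by ring]
    exact add_mem (mul_mem (pow_mem hu m) hn) (mul_mem (pow_mem hu n) hm)
  | mul y z _ _ hy hz =>
    obtain ⟨n, hn⟩ := hy
    obtain ⟨m, hm⟩ := hz
    refine ⟨n + m, ?_⟩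
    rw [show u ^ (n + m) * (y * z) = (u ^ n * y) * (u ^ m * z) by ring]
    exact mul_mem hn hm

theorem Subalgebra.mem_of_inv_mem_of_mul_sub_mem {R F : Type*} [CommSemiring R] [Field F]
    [Algebra R F] {S : Subalgebra R F} {u y z : F} (hu : u ≠ 0) (hu' : u⁻¹ ∈ S) (hy : y ∈ S)
    (h : u * z - y ∈ S) : z ∈ S := by
  have hz : u⁻¹ * ((u * z - y) + y) = z := by field_simp; ring
  exact hz ▸ mul_mem hu' (add_mem h hy)

theorem exists_algebraMap_eq_of_pow_mul_eq {R A : Type*} [CommRing R] [IsDomain R] [CommRing A]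
    [IsDomain A] [Algebra R A] (hinj : Function.Injective (algebraMap R A)) {π ρ p q : R}
    (hπ : Prime π) (hπρ : ¬ π ∣ ρ) {n m : ℕ} {x : A}
    (hp : algebraMap R A π ^ n * x = algebraMap R A p)
    (hq : algebraMap R A ρ ^ m * x = algebraMap R A q) :
    ∃ r : R, algebraMap R A r = x := by
  have hpq : ρ ^ m * p = π ^ n * q := hinj <| by
    simp only [map_mul, map_pow, ← hp, ← hq]
    ring
  have hdvd : π ^ n ∣ p :=
    hπ.pow_dvd_of_dvd_mul_left n (fun h ↦ hπρ (hπ.dvd_of_dvd_pow h)) ⟨q, hpq⟩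
  obtain ⟨r, rfl⟩ := hdvd
  have hπ0 : algebraMap R A π ≠ 0 := (map_ne_zero_iff _ hinj).mpr hπ.ne_zero
  refine ⟨r, mul_left_cancel₀ (pow_ne_zero n hπ0) ?_⟩
  rw [hp, map_mul, map_pow]

theorem MvPolynomial.adjoin_range_algebraMap_X (σ R A : Type*) [CommSemiring R] [CommSemiring A]
    [Algebra R A] [Algebra (MvPolynomial σ R) A] [IsScalarTower R (MvPolynomial σ R) A] :
    Algebra.adjoin R (Set.range fun i ↦ algebraMap (MvPolynomial σ R) A (X i)) =
      (IsScalarTower.toAlgHom R (MvPolynomial σ R) A).range := by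
  rw [Algebra.adjoin_range_eq_range_aeval]
  congr 1
  ext i
  simp

theorem MvPolynomial.adjoin_algebraMap_X_fin_three (R A : Type*) [CommSemiring R] [CommSemiring A]
    [Algebra R A] [Algebra (MvPolynomial (Fin 3) R) A]
    [IsScalarTower R (MvPolynomial (Fin 3) R) A] :
    Algebra.adjoin R {algebraMap (MvPolynomial (Fin 3) R) A (X 0),
      algebraMap (MvPolynomial (Fin 3) R) A (X 1), algebraMap (MvPolynomial (Fin 3) R) A (X 2)} =
      (IsScalarTower.toAlgHom R (MvPolynomial (Fin 3) R) A).range := by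
  rw [← adjoin_range_algebraMap_X]
  congr 1
  ext
  simp [Fin.exists_fin_succ, eq_comm]

theorem stmt0_general (K : Type*) [Field K]
    (F : Type*) [Field F] [Algebra (MvPolynomial (Fin 3) K) F]
    [IsFractionRing (MvPolynomial (Fin 3) K) F]
    [Algebra K F] [IsScalarTower K (MvPolynomial (Fin 3) K) F]
    (a b c : F)
    (ha : a = algebraMap (MvPolynomial (Fin 3) K) F (X 0))
    (hb : b = algebraMap (MvPolynomial (Fin 3) K) F (X 1))
    (hc : c = algebraMap (MvPolynomial (Fin 3) K) F (X 2)) :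
    Algebra.adjoin K {a, a⁻¹, b, a * c - b} ⊓
      Algebra.adjoin K {c, c⁻¹, b, a * c - b} =
    Algebra.adjoin K {a, b, c} := by
  have hinj : Function.Injective (algebraMap (MvPolynomial (Fin 3) K) F) :=
    IsFractionRing.injective _ _
  have ha0 : a ≠ 0 := ha ▸ (map_ne_zero_iff _ hinj).mpr (X_ne_zero 0)
  have hc0 : c ≠ 0 := hc ▸ (map_ne_zero_iff _ hinj).mpr (X_ne_zero 2)
  have hR : Algebra.adjoin K {a, b, c} =
      (IsScalarTower.toAlgHom K (MvPolynomial (Fin 3) K) F).range :=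
    ha ▸ hb ▸ hc ▸ adjoin_algebraMap_X_fin_three K F
  obtain ⟨haR, hbR, hcR⟩ : a ∈ Algebra.adjoin K {a, b, c} ∧ b ∈ Algebra.adjoin K {a, b, c} ∧
      c ∈ Algebra.adjoin K {a, b, c} := by
    simpa only [Set.insert_subset_iff, Set.singleton_subset_iff, SetLike.mem_coe] using
      Algebra.subset_adjoin (R := K) (s := {a, b, c})
  have hacbR : a * c - b ∈ Algebra.adjoin K {a, b, c} := sub_mem (mul_mem haR hcR) hbR
  apply le_antisymm
  · rintro x ⟨hxa, hxc⟩
    rw [Set.insert_comm] at hxa hxc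
    obtain ⟨n, hn⟩ := Subalgebra.exists_pow_mul_mem_of_mem_adjoin_insert haR
      (mul_inv_cancel₀ ha0) (by simp [Set.insert_subset_iff, haR, hbR, hacbR]) hxa
    obtain ⟨m, hm⟩ := Subalgebra.exists_pow_mul_mem_of_mem_adjoin_insert hcR
      (mul_inv_cancel₀ hc0) (by simp [Set.insert_subset_iff, hcR, hbR, hacbR]) hxc
    rw [hR] at hn hm ⊢
    obtain ⟨p, hp⟩ := hn
    obtain ⟨q, hq⟩ := hm
    rw [ha] at hp
    rw [hc] at hq
    exact exists_algebraMap_eq_of_pow_mul_eq hinj X_prime (by simp) hp.symm hq.symm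
  · refine le_inf (Algebra.adjoin_le ?_) (Algebra.adjoin_le ?_)
      <;> simp only [Set.insert_subset_iff, Set.singleton_subset_iff, SetLike.mem_coe]
    · refine ⟨Algebra.subset_adjoin (by simp), Algebra.subset_adjoin (by simp), ?_⟩
      exact Subalgebra.mem_of_inv_mem_of_mul_sub_mem (y := b) ha0
        (Algebra.subset_adjoin (by simp)) (Algebra.subset_adjoin (by simp))
        (Algebra.subset_adjoin (by simp))
    · refine ⟨?_, Algebra.subset_adjoin (by simp), Algebra.subset_adjoin (by simp)⟩
      refine Subalgebra.mem_of_inv_mem_of_mul_sub_mem (y := b) hc0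
        (Algebra.subset_adjoin (by simp)) (Algebra.subset_adjoin (by simp)) ?_
      exact mul_comm a c ▸ Algebra.subset_adjoin (by simp)

/-- In the fraction field `F` of `K[a,b,c]`, the intersection of the `K`-subalgebra
generated by `{a, a⁻¹, b, ac−b}` with the `K`-subalgebra generated by `{c, c⁻¹, b, ac−b}`
equals the `K`-subalgebra generated by `{a, b, c}`. -/
theorem stmt0 (K : Type*) [Field K] [IsAlgClosed K] [CharZero K]
    (F : Type*) [Field F] [Algebra (MvPolynomial (Fin 3) K) F]
    [IsFractionRing (MvPolynomial (Fin 3) K) F]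
    [Algebra K F] [IsScalarTower K (MvPolynomial (Fin 3) K) F]
    (a b c : F)
    (ha : a = algebraMap (MvPolynomial (Fin 3) K) F (X 0))
    (hb : b = algebraMap (MvPolynomial (Fin 3) K) F (X 1))
    (hc : c = algebraMap (MvPolynomial (Fin 3) K) F (X 2)) :
    Algebra.adjoin K {a, a⁻¹, b, a * c - b} ⊓
      Algebra.adjoin K {c, c⁻¹, b, a * c - b} =
    Algebra.adjoin K {a, b, c} :=
  stmt0_general K F a b c ha hb hc
end

section
/- Inside the fraction field F of the polynomial ring K[a,b,c], the intersection of the K-subalgebra generated by {a, a⁻¹, b, b⁻¹, ac−b} with the K-subalgebra generated by {c, c⁻¹, b, b⁻¹, ac−b} equals the K-subalgebra generated by {a, b, c, b⁻¹}. -/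
/-!
Let `S₀ = K[a, b, c]` be the image of the polynomial ring. Since `c = (ac - b + b) a⁻¹`, the
first algebra is the localization `S₀[(ab)⁻¹]`, and symmetrically the second is `S₀[(cb)⁻¹]`.
So an element `x` of the intersection has `x (ab)ⁿ, x (cb)ᵏ ∈ S₀`, and `u = x bⁿ⁺ᵏ` has
`u aⁿ, u cᵏ ∈ S₀`. As `a` is prime in `S₀` and does not divide `c`, the identity
`(u aⁿ) cᵏ = (u cᵏ) aⁿ` forces `aⁿ ∣ u aⁿ` in `S₀`, i.e. `u ∈ S₀`, and `x = u b⁻⁽ⁿ⁺ᵏ⁾`.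
-/

open MvPolynomial

section Subalgebra

variable {K F : Type*} [CommSemiring K] [Field F] [Algebra K F]

theorem Subalgebra.exists_mul_pow_mem_of_mem_adjoin_insert_inv (S : Subalgebra K F) {s x : F}
    (hs : s ∈ S) (hx : x ∈ Algebra.adjoin K (insert s⁻¹ (S : Set F))) :
    ∃ n : ℕ, x * s ^ n ∈ S := by
  induction hx using Algebra.adjoin_induction with
  | mem y hy =>
    rcases hy with rfl | hy
    · refine ⟨1, ?_⟩
      rcases eq_or_ne s 0 with rfl | hs0
      · simp
      · rw [pow_one, inv_mul_cancel₀ hs0]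
        exact S.one_mem
    · exact ⟨0, by rwa [pow_zero, mul_one]⟩
  | algebraMap r => exact ⟨0, by rw [pow_zero, mul_one]; exact S.algebraMap_mem r⟩
  | add u v _ _ ihu ihv =>
    obtain ⟨n, hn⟩ := ihu
    obtain ⟨m, hm⟩ := ihv
    refine ⟨n + m, ?_⟩
    have : (u + v) * s ^ (n + m) = u * s ^ n * s ^ m + v * s ^ m * s ^ n := by ring
    rw [this]
    exact add_mem (mul_mem hn (pow_mem hs m)) (mul_mem hm (pow_mem hs n))
  | mul u v _ _ ihu ihv =>
    obtain ⟨n, hn⟩ := ihu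
    obtain ⟨m, hm⟩ := ihv
    exact ⟨n + m, by rw [pow_add, mul_mul_mul_comm]; exact mul_mem hn hm⟩

theorem Subalgebra.exists_mul_pow_mem_of_mem_adjoin_inv (S : Subalgebra K F) {p q d x : F}
    (hp : p ∈ S) (hq : q ∈ S) (hd : d ∈ S) (hp0 : p ≠ 0) (hq0 : q ≠ 0)
    (hx : x ∈ Algebra.adjoin K {p, p⁻¹, q, q⁻¹, d}) :
    ∃ n : ℕ, x * (p * q) ^ n ∈ S := by
  refine S.exists_mul_pow_mem_of_mem_adjoin_insert_inv (mul_mem hp hq) (Algebra.adjoin_le ?_ hx)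
  have hinv : (p * q)⁻¹ ∈ Algebra.adjoin K (insert (p * q)⁻¹ (S : Set F)) :=
    Algebra.subset_adjoin (Set.mem_insert _ _)
  have hS {y : F} (hy : y ∈ S) : y ∈ Algebra.adjoin K (insert (p * q)⁻¹ (S : Set F)) :=
    Algebra.subset_adjoin (Set.mem_insert_of_mem _ hy)
  have hp_inv : p⁻¹ = q * (p * q)⁻¹ := by field_simp
  have hq_inv : q⁻¹ = p * (p * q)⁻¹ := by field_simp
  simp only [Set.insert_subset_iff, Set.singleton_subset_iff, SetLike.mem_coe, hp_inv, hq_inv]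
  exact ⟨hS hp, mul_mem (hS hq) hinv, hS hq, mul_mem (hS hp) hinv, hS hd⟩

theorem mem_adjoin_of_mul_sub {p q b : F} (hp : p ≠ 0) :
    q ∈ Algebra.adjoin K {p, p⁻¹, b, b⁻¹, p * q - b} := by
  have hq : (p * q - b + b) * p⁻¹ = q := by field_simp; ring
  have hgen {y : F} (hy : y ∈ ({p, p⁻¹, b, b⁻¹, p * q - b} : Set F)) :
      y ∈ Algebra.adjoin K {p, p⁻¹, b, b⁻¹, p * q - b} :=
    Algebra.subset_adjoin hy
  have h := mul_mem (add_mem (hgen (y := p * q - b) (by simp)) (hgen (y := b) (by simp)))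
    (hgen (y := p⁻¹) (by simp))
  rwa [hq] at h

end Subalgebra

theorem mem_range_of_mul_pow_mem_range {R F : Type*} [CommSemiring R] [IsDomain R]
    [CommSemiring F] [IsDomain F] {φ : R →+* F} (hφ : Function.Injective φ) {p q : R}
    (hp : Prime p) (hpq : ¬p ∣ q) {x : F} {m n : ℕ}
    (hxp : x * φ p ^ m ∈ Set.range φ) (hxq : x * φ q ^ n ∈ Set.range φ) : x ∈ Set.range φ := by
  obtain ⟨P, hP⟩ := hxp
  obtain ⟨Q, hQ⟩ := hxq
  have hPQ : P * q ^ n = Q * p ^ m := hφ (by simp only [map_mul, map_pow, hP, hQ]; ring)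
  obtain ⟨P', rfl⟩ : p ^ m ∣ P :=
    hp.pow_dvd_of_dvd_mul_right m (fun h => hpq (hp.dvd_of_dvd_pow h))
      (by rw [hPQ]; exact dvd_mul_left _ _)
  refine ⟨P', mul_right_cancel₀ (pow_ne_zero m ((map_ne_zero_iff φ hφ).mpr hp.ne_zero)) ?_⟩
  rw [← hP, map_mul, map_pow, mul_comm]

theorem range_toAlgHom_mvPolynomial (K σ F : Type*) [CommSemiring K] [CommSemiring F]
    [Algebra K F] [Algebra (MvPolynomial σ K) F] [IsScalarTower K (MvPolynomial σ K) F] :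
    (IsScalarTower.toAlgHom K (MvPolynomial σ K) F).range =
      Algebra.adjoin K (Set.range fun i => algebraMap (MvPolynomial σ K) F (X i)) := by
  rw [← Algebra.map_top, ← adjoin_range_X, AlgHom.map_adjoin, ← Set.range_comp]
  rfl

theorem exists_mul_pow_mem_range_of_mem_adjoin_inv_inf {K R F : Type*} [CommSemiring K]
    [CommRing R] [IsDomain R] [Field F] [Algebra K R] [Algebra K F] [Algebra R F]
    [IsScalarTower K R F] (hinj : Function.Injective (algebraMap R F)) {p q r : R}
    (hp : Prime p) (hpq : ¬p ∣ q) (hq : q ≠ 0) (hr : r ≠ 0) {d x : F}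
    (hd : d ∈ (IsScalarTower.toAlgHom K R F).range)
    (hx : x ∈ Algebra.adjoin K {algebraMap R F p, (algebraMap R F p)⁻¹,
        algebraMap R F r, (algebraMap R F r)⁻¹, d} ⊓
      Algebra.adjoin K {algebraMap R F q, (algebraMap R F q)⁻¹,
        algebraMap R F r, (algebraMap R F r)⁻¹, d}) :
    ∃ k : ℕ, x * algebraMap R F r ^ k ∈ (IsScalarTower.toAlgHom K R F).range := by
  set φ := algebraMap R F
  set S := (IsScalarTower.toAlgHom K R F).range
  have hmem (y : R) : φ y ∈ S := ⟨y, rfl⟩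
  have hne {y : R} (hy : y ≠ 0) : φ y ≠ 0 := (map_ne_zero_iff _ hinj).mpr hy
  obtain ⟨m, hm⟩ := S.exists_mul_pow_mem_of_mem_adjoin_inv (hmem p) (hmem r) hd
    (hne hp.ne_zero) (hne hr) hx.1
  obtain ⟨n, hn⟩ := S.exists_mul_pow_mem_of_mem_adjoin_inv (hmem q) (hmem r) hd
    (hne hq) (hne hr) hx.2
  refine ⟨m + n, mem_range_of_mul_pow_mem_range hinj hp hpq (m := m) (n := n) ?_ ?_⟩
  · rw [show x * φ r ^ (m + n) * φ p ^ m = x * (φ p * φ r) ^ m * φ r ^ n by ring]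
    exact mul_mem hm (pow_mem (hmem r) n)
  · rw [show x * φ r ^ (m + n) * φ q ^ n = x * (φ q * φ r) ^ n * φ r ^ m by ring]
    exact mul_mem hn (pow_mem (hmem r) m)

theorem stmt1_general (K : Type*) [Field K]
    (F : Type*) [Field F] [Algebra (MvPolynomial (Fin 3) K) F]
    [IsFractionRing (MvPolynomial (Fin 3) K) F]
    [Algebra K F] [IsScalarTower K (MvPolynomial (Fin 3) K) F]
    (a b c : F)
    (ha : a = algebraMap (MvPolynomial (Fin 3) K) F (X 0))
    (hb : b = algebraMap (MvPolynomial (Fin 3) K) F (X 1))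
    (hc : c = algebraMap (MvPolynomial (Fin 3) K) F (X 2)) :
    Algebra.adjoin K {a, a⁻¹, b, b⁻¹, a * c - b} ⊓
      Algebra.adjoin K {c, c⁻¹, b, b⁻¹, a * c - b} =
    Algebra.adjoin K {a, b, c, b⁻¹} := by
  have hφ : Function.Injective (algebraMap (MvPolynomial (Fin 3) K) F) :=
    IsFractionRing.injective _ _
  have hX_ne (i : Fin 3) : algebraMap (MvPolynomial (Fin 3) K) F (X i) ≠ 0 :=
    (map_ne_zero_iff _ hφ).mpr (X_ne_zero i)
  have hgen {y : F} (hy : y ∈ ({a, b, c, b⁻¹} : Set F)) :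
      y ∈ Algebra.adjoin K {a, b, c, b⁻¹} :=
    Algebra.subset_adjoin hy
  refine le_antisymm (fun x hx => ?_) (le_inf (Algebra.adjoin_le ?_) (Algebra.adjoin_le ?_))
  · have hS₀_le : (IsScalarTower.toAlgHom K (MvPolynomial (Fin 3) K) F).range ≤
        Algebra.adjoin K {a, b, c, b⁻¹} := by
      rw [range_toAlgHom_mvPolynomial]
      refine Algebra.adjoin_le ?_
      rintro _ ⟨i, rfl⟩
      fin_cases i <;> exact hgen (by simp [ha, hb, hc])
    rw [ha, hb, hc] at hx
    obtain ⟨k, hk⟩ := exists_mul_pow_mem_range_of_mem_adjoin_inv_inf hφ X_prime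
      (X_dvd_X.not.mpr (by decide)) (X_ne_zero 2) (X_ne_zero 1)
      (sub_mem (mul_mem ⟨X 0, rfl⟩ ⟨X 2, rfl⟩) ⟨X 1, rfl⟩) hx
    rw [← mul_inv_cancel_right₀ (pow_ne_zero k (hX_ne 1)) x, ← inv_pow, ← hb]
    exact mul_mem (hS₀_le (hb ▸ hk)) (pow_mem (hgen (by simp)) k)
  · simp only [Set.insert_subset_iff, Set.singleton_subset_iff, SetLike.mem_coe]
    refine ⟨?_, ?_, mem_adjoin_of_mul_sub (ha ▸ hX_ne 0), ?_⟩ <;>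
      exact Algebra.subset_adjoin (by simp)
  · simp only [Set.insert_subset_iff, Set.singleton_subset_iff, SetLike.mem_coe]
    refine ⟨mul_comm c a ▸ mem_adjoin_of_mul_sub (hc ▸ hX_ne 2), ?_, ?_, ?_⟩ <;>
      exact Algebra.subset_adjoin (by simp)

/-- In the fraction field `F` of `K[a,b,c]`, the intersection of the `K`-subalgebra
generated by `{a, a⁻¹, b, b⁻¹, ac−b}` with the `K`-subalgebra generated by
`{c, c⁻¹, b, b⁻¹, ac−b}` equals the `K`-subalgebra generated by `{a, b, c, b⁻¹}`. -/
theorem stmt1 (K : Type*) [Field K] [IsAlgClosed K] [CharZero K]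
    (F : Type*) [Field F] [Algebra (MvPolynomial (Fin 3) K) F]
    [IsFractionRing (MvPolynomial (Fin 3) K) F]
    [Algebra K F] [IsScalarTower K (MvPolynomial (Fin 3) K) F]
    (a b c : F)
    (ha : a = algebraMap (MvPolynomial (Fin 3) K) F (X 0))
    (hb : b = algebraMap (MvPolynomial (Fin 3) K) F (X 1))
    (hc : c = algebraMap (MvPolynomial (Fin 3) K) F (X 2)) :
    Algebra.adjoin K {a, a⁻¹, b, b⁻¹, a * c - b} ⊓
      Algebra.adjoin K {c, c⁻¹, b, b⁻¹, a * c - b} =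
    Algebra.adjoin K {a, b, c, b⁻¹} :=
  stmt1_general K F a b c ha hb hc
end

section
/- Inside the fraction field F of the polynomial ring K[a,b,c], the intersection of the K-subalgebra generated by {a, a⁻¹, b, b⁻¹, ac−b, (ac−b)⁻¹} with the K-subalgebra generated by {c, c⁻¹, b, b⁻¹, ac−b, (ac−b)⁻¹} equals the K-subalgebra generated by {a, b, c, b⁻¹, (ac−b)⁻¹}. -/
/-!
Write `P = ac - b`. Clearing denominators, an element of the first algebra is `f / (abP)^n` and an
element of the second is `g / (cbP)^m` with `f, g ∈ K[a,b,c]`. Then `f (cbP)^m = g (abP)^n`, and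
since the prime `a` divides none of `c`, `b`, `P`, it follows that `a^n ∣ f`: the element is a
polynomial divided by `(bP)^n`. Conversely `c = (P + b) / a` and `a = (P + b) / c`.
-/

open MvPolynomial

namespace Subalgebra

variable {K F : Type*} [CommSemiring K]

section CommRing

variable [CommRing F] [Algebra K F] (S : Subalgebra K F) {s : F}

/-- For `s` invertible in `F`, this is the image of the localization `S[1/s]`. -/
def away (hs : s ∈ S) : Subalgebra K F where
  carrier := {x | ∃ n : ℕ, x * s ^ n ∈ S}
  mul_mem' := by
    rintro x y ⟨n, hx⟩ ⟨m, hy⟩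
    exact ⟨n + m, by simpa only [pow_add, mul_mul_mul_comm] using S.mul_mem hx hy⟩
  add_mem' := by
    rintro x y ⟨n, hx⟩ ⟨m, hy⟩
    refine ⟨n + m, ?_⟩
    rw [show (x + y) * s ^ (n + m) = x * s ^ n * s ^ m + y * s ^ m * s ^ n by ring]
    exact add_mem (mul_mem hx (pow_mem hs m)) (mul_mem hy (pow_mem hs n))
  algebraMap_mem' r := ⟨0, by simp⟩

theorem le_away (hs : s ∈ S) : S ≤ S.away hs :=
  fun x hx => ⟨0, by simpa using hx⟩

end CommRing

section Field

variable [Field F] [Algebra K F] (S : Subalgebra K F)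

theorem inv_mem_away {s u t : F} (hs : s ∈ S) (hu : u ≠ 0) (ht : t ∈ S) (hut : u * t = s) :
    u⁻¹ ∈ S.away hs :=
  ⟨1, by rwa [pow_one, ← hut, inv_mul_cancel_left₀ hu]⟩

theorem adjoin_inv_le_away {u v w : F} (hu : u ∈ S) (hv : v ∈ S) (hw : w ∈ S)
    (hu₀ : u ≠ 0) (hv₀ : v ≠ 0) (hw₀ : w ≠ 0) :
    Algebra.adjoin K {u, u⁻¹, v, v⁻¹, w, w⁻¹} ≤ S.away (mul_mem (mul_mem hu hv) hw) := by
  have hS := S.le_away (mul_mem (mul_mem hu hv) hw)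
  simp only [Algebra.adjoin_le_iff, Set.insert_subset_iff, Set.singleton_subset_iff]
  exact ⟨hS hu, S.inv_mem_away _ hu₀ (mul_mem hv hw) (by ring), hS hv,
    S.inv_mem_away _ hv₀ (mul_mem hu hw) (by ring), hS hw,
    S.inv_mem_away _ hw₀ (mul_mem hu hv) (by ring)⟩

theorem away_le_of_inv_mem {T : Subalgebra K F} {s : F} (hs : s ∈ S) (hs₀ : s ≠ 0)
    (hST : S ≤ T) (hinv : s⁻¹ ∈ T) : S.away hs ≤ T := by
  rintro x ⟨n, hx⟩
  rw [← mul_inv_cancel_right₀ (pow_ne_zero n hs₀) x, ← inv_pow]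
  exact mul_mem (hST hx) (pow_mem hinv n)

end Field

end Subalgebra

theorem adjoin_le_adjoin_inv_of_mul_sub {K F : Type*} [CommSemiring K] [Field F] [Algebra K F]
    {u v w : F} (hu : u ≠ 0) :
    Algebra.adjoin K {u, v, w, v⁻¹, (u * w - v)⁻¹} ≤
      Algebra.adjoin K {u, u⁻¹, v, v⁻¹, u * w - v, (u * w - v)⁻¹} := by
  have hmem : ∀ y ∈ ({u, u⁻¹, v, v⁻¹, u * w - v, (u * w - v)⁻¹} : Set F),
      y ∈ Algebra.adjoin K {u, u⁻¹, v, v⁻¹, u * w - v, (u * w - v)⁻¹} :=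
    fun y hy => Algebra.subset_adjoin hy
  simp only [Algebra.adjoin_le_iff, Set.insert_subset_iff, Set.singleton_subset_iff]
  refine ⟨hmem u (by simp), hmem v (by simp), ?_, hmem _ (by simp), hmem _ (by simp)⟩
  have hw :=
    mul_mem (hmem u⁻¹ (by simp)) (add_mem (hmem (u * w - v) (by simp)) (hmem v (by simp)))
  rwa [sub_add_cancel, inv_mul_cancel_left₀ hu] at hw

theorem mul_pow_mem_range_of_prime {R F : Type*} [CommRing R] [IsDomain R] [Field F]
    [Algebra R F] (hinj : Function.Injective (algebraMap R F)) {p q r : R} (hp : Prime p)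
    (hr : ¬ p ∣ r) {x : F} {n m : ℕ}
    (h₁ : x * algebraMap R F (p * q) ^ n ∈ (algebraMap R F).range)
    (h₂ : x * algebraMap R F r ^ m ∈ (algebraMap R F).range) :
    x * algebraMap R F q ^ n ∈ (algebraMap R F).range := by
  obtain ⟨f, hf⟩ := h₁
  obtain ⟨g, hg⟩ := h₂
  have hfg : f * r ^ m = g * (p * q) ^ n :=
    hinj (by rw [map_mul, map_mul, map_pow, map_pow, hf, hg]; ring)
  obtain ⟨h, rfl⟩ : p ^ n ∣ f :=
    hp.pow_dvd_of_dvd_mul_right n (fun hdvd => hr (hp.dvd_of_dvd_pow hdvd))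
      ⟨g * q ^ n, by rw [hfg]; ring⟩
  have hp₀ : algebraMap R F p ^ n ≠ 0 := pow_ne_zero n ((map_ne_zero_iff _ hinj).2 hp.ne_zero)
  refine ⟨h, mul_left_cancel₀ hp₀ ?_⟩
  calc algebraMap R F p ^ n * algebraMap R F h = algebraMap R F (p ^ n * h) := by simp
    _ = _ := hf
    _ = _ := by rw [map_mul, mul_pow]; ring

theorem MvPolynomial.range_toAlgHom_eq_adjoin {σ K F : Type*} [CommSemiring K] [CommSemiring F]
    [Algebra K F] [Algebra (MvPolynomial σ K) F] [IsScalarTower K (MvPolynomial σ K) F] :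
    (IsScalarTower.toAlgHom K (MvPolynomial σ K) F).range =
      Algebra.adjoin K (Set.range fun i => algebraMap (MvPolynomial σ K) F (X i)) := by
  rw [← Algebra.map_top, ← adjoin_range_X, ← Algebra.adjoin_image, ← Set.range_comp]
  rfl

theorem adjoin_inv_inf_adjoin_inv_le {K R F : Type*} [CommSemiring K] [CommRing R]
    [IsDomain R] [Field F] [Algebra K R] [Algebra K F] [Algebra R F] [IsScalarTower K R F]
    (hinj : Function.Injective (algebraMap R F)) {p q r s : R} (hp : Prime p)
    (hdvd : ¬ p ∣ s * q * r) {T : Subalgebra K F}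
    (hT : (IsScalarTower.toAlgHom K R F).range ≤ T)
    (hq : (algebraMap R F q)⁻¹ ∈ T) (hr : (algebraMap R F r)⁻¹ ∈ T) :
    Algebra.adjoin K {algebraMap R F p, (algebraMap R F p)⁻¹, algebraMap R F q,
        (algebraMap R F q)⁻¹, algebraMap R F r, (algebraMap R F r)⁻¹} ⊓
      Algebra.adjoin K {algebraMap R F s, (algebraMap R F s)⁻¹, algebraMap R F q,
        (algebraMap R F q)⁻¹, algebraMap R F r, (algebraMap R F r)⁻¹} ≤ T := by
  set S := (IsScalarTower.toAlgHom K R F).range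
  have hS : ∀ f, algebraMap R F f ∈ S := fun f => ⟨f, rfl⟩
  have h₀ : ∀ f, f ≠ 0 → algebraMap R F f ≠ 0 := fun f => (map_ne_zero_iff _ hinj).2
  have hsqr : s * q * r ≠ 0 := fun h => hdvd (h ▸ dvd_zero p)
  obtain ⟨hsq, hr₀⟩ := mul_ne_zero_iff.1 hsqr
  obtain ⟨hs₀, hq₀⟩ := mul_ne_zero_iff.1 hsq
  rintro x ⟨hxA, hxB⟩
  obtain ⟨n, hn⟩ :=
    S.adjoin_inv_le_away (hS p) (hS q) (hS r) (h₀ _ hp.ne_zero) (h₀ _ hq₀) (h₀ _ hr₀) hxA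
  obtain ⟨m, hm⟩ :=
    S.adjoin_inv_le_away (hS s) (hS q) (hS r) (h₀ _ hs₀) (h₀ _ hq₀) (h₀ _ hr₀) hxB
  rw [← map_mul, ← map_mul, mul_assoc] at hn
  rw [← map_mul, ← map_mul] at hm
  refine S.away_le_of_inv_mem (hS (q * r)) (h₀ _ (mul_ne_zero hq₀ hr₀)) hT ?_
    ⟨n, mul_pow_mem_range_of_prime hinj hp hdvd hn hm⟩
  rw [map_mul, mul_inv]
  exact mul_mem hq hr

theorem X_zero_not_dvd_mul_sub {K : Type*} [Field K] :
    ¬ (X 0 : MvPolynomial (Fin 3) K) ∣ X 2 * X 1 * (X 0 * X 2 - X 1) := by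
  simp only [X_dvd_mul_iff, X_dvd_X, dvd_sub_right (dvd_mul_right _ _)]
  decide

theorem stmt3_general (K : Type*) [Field K]
    (F : Type*) [Field F] [Algebra (MvPolynomial (Fin 3) K) F]
    [IsFractionRing (MvPolynomial (Fin 3) K) F]
    [Algebra K F] [IsScalarTower K (MvPolynomial (Fin 3) K) F]
    (a b c : F)
    (ha : a = algebraMap (MvPolynomial (Fin 3) K) F (X 0))
    (hb : b = algebraMap (MvPolynomial (Fin 3) K) F (X 1))
    (hc : c = algebraMap (MvPolynomial (Fin 3) K) F (X 2)) :
    Algebra.adjoin K {a, a⁻¹, b, b⁻¹, a * c - b, (a * c - b)⁻¹} ⊓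
      Algebra.adjoin K {c, c⁻¹, b, b⁻¹, a * c - b, (a * c - b)⁻¹} =
    Algebra.adjoin K {a, b, c, b⁻¹, (a * c - b)⁻¹} := by
  set φ := algebraMap (MvPolynomial (Fin 3) K) F
  have hinj : Function.Injective φ := IsFractionRing.injective _ _
  have hP : a * c - b = φ (X 0 * X 2 - X 1) := by rw [ha, hb, hc, map_sub, map_mul]
  have h₀ : ∀ i, φ (X i) ≠ 0 := fun i => (map_ne_zero_iff _ hinj).2 (X_ne_zero i)
  have hT : (IsScalarTower.toAlgHom K (MvPolynomial (Fin 3) K) F).range ≤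
      Algebra.adjoin K {a, b, c, b⁻¹, (a * c - b)⁻¹} := by
    rw [range_toAlgHom_eq_adjoin]
    exact Algebra.adjoin_mono
      (Set.range_subset_iff.2 fun i => by fin_cases i <;> simp [φ, ha, hb, hc])
  apply le_antisymm
  · have hle := adjoin_inv_inf_adjoin_inv_le hinj X_prime X_zero_not_dvd_mul_sub hT
      (hb ▸ Algebra.subset_adjoin (by simp)) (hP ▸ Algebra.subset_adjoin (by simp))
    rwa [← ha, ← hb, ← hc, ← hP] at hle
  · have hB := adjoin_le_adjoin_inv_of_mul_sub (K := K) (u := c) (v := b) (w := a) (hc ▸ h₀ 2)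
    rw [mul_comm c a, Set.insert_comm c b, Set.insert_comm c a, Set.insert_comm b a] at hB
    exact le_inf (adjoin_le_adjoin_inv_of_mul_sub (ha ▸ h₀ 0)) hB

/-- In the fraction field `F` of `K[a,b,c]`, the intersection of the `K`-subalgebra
generated by `{a, a⁻¹, b, b⁻¹, ac−b, (ac−b)⁻¹}` with the `K`-subalgebra generated by
`{c, c⁻¹, b, b⁻¹, ac−b, (ac−b)⁻¹}` equals the `K`-subalgebra generated by
`{a, b, c, b⁻¹, (ac−b)⁻¹}`. -/
theorem stmt3 (K : Type*) [Field K] [IsAlgClosed K] [CharZero K]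
    (F : Type*) [Field F] [Algebra (MvPolynomial (Fin 3) K) F]
    [IsFractionRing (MvPolynomial (Fin 3) K) F]
    [Algebra K F] [IsScalarTower K (MvPolynomial (Fin 3) K) F]
    (a b c : F)
    (ha : a = algebraMap (MvPolynomial (Fin 3) K) F (X 0))
    (hb : b = algebraMap (MvPolynomial (Fin 3) K) F (X 1))
    (hc : c = algebraMap (MvPolynomial (Fin 3) K) F (X 2)) :
    Algebra.adjoin K {a, a⁻¹, b, b⁻¹, a * c - b, (a * c - b)⁻¹} ⊓
      Algebra.adjoin K {c, c⁻¹, b, b⁻¹, a * c - b, (a * c - b)⁻¹} =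
    Algebra.adjoin K {a, b, c, b⁻¹, (a * c - b)⁻¹} :=
  stmt3_general K F a b c ha hb hc
end

section
/- For all positive integers a and b, the K-algebra R(a,b) = K[x₁,x₂,x₃,x₄]/(x₁x₃ − 1 − x₂^a, x₂x₄ − 1 − x₁^b) is a smooth K-algebra (of finite presentation and formally smooth). -/
/-!
If the Jacobian `J` of generators `f` of an ideal `I` of a polynomial ring `P` has a right inverse
`N` modulo `I`, then the Newton step `X ↦ X - N f` is an endomorphism of `P` that is the identity
modulo `I` and, by first-order Taylor expansion, sends `f` to `(1 - J N) f ≡ 0` modulo `I ^ 2`.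
It therefore splits the thickening `P ⧸ I ^ 2 → P ⧸ I`, so `P ⧸ I` is formally smooth.

For the relations `x₁x₃ - 1 - x₂ᵃ`, `x₂x₄ - 1 - x₁ᵇ` of `R(a,b)` such a right inverse exists once
`ab` is invertible; its entries are chosen so that `J N - 1` reduces, via `x₁x₃ = 1 + x₂ᵃ` and
`x₂x₄ = 1 + x₁ᵇ`, to explicit combinations of the relations. Finite presentation is clear.
-/

open MvPolynomial
open scoped Matrix

namespace Algebra.FormallySmooth

theorem quotient_of_le_comap_sq {R P : Type*} [CommRing R] [CommRing P] [Algebra R P]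
    [FormallySmooth R P] (I : Ideal P) (ψ : P →ₐ[R] P) (hψI : I ≤ (I ^ 2).comap ψ)
    (hψ : (Ideal.Quotient.mkₐ R I).comp ψ = Ideal.Quotient.mkₐ R I) :
    FormallySmooth R (P ⧸ I) := by
  have hker : I ^ 2 = RingHom.ker (Ideal.Quotient.mkₐ R I).toRingHom ^ 2 :=
    congrArg (· ^ 2) (Ideal.Quotient.mkₐ_ker R I).symm
  refine of_split (Ideal.Quotient.mkₐ R I) ((Ideal.quotientEquivAlgOfEq R hker).toAlgHom.comp
    (Ideal.Quotient.liftₐ I ((Ideal.Quotient.mkₐ R (I ^ 2)).comp ψ) fun p hp => ?_)) ?_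
  · exact Ideal.Quotient.eq_zero_iff_mem.mpr (hψI hp)
  · refine Ideal.Quotient.algHom_ext R (AlgHom.ext fun p => ?_)
    exact congr($hψ p)

end Algebra.FormallySmooth

namespace MvPolynomial

variable {R σ : Type*} [CommRing R]

theorem aeval_X_add_sub_sub_sum_pderiv_mem_sq [Fintype σ] {I : Ideal (MvPolynomial σ R)}
    {d : σ → MvPolynomial σ R} (hd : ∀ i, d i ∈ I) (p : MvPolynomial σ R) :
    aeval (fun i => X i + d i) p - p - ∑ i, pderiv i p * d i ∈ I ^ 2 := by
  classical
  induction p using MvPolynomial.induction_on with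
  | C r => simp
  | add p q hp hq =>
    convert add_mem hp hq using 1
    simp only [map_add, add_mul, Finset.sum_add_distrib]
    ring
  | mul_X p j hp =>
    have hsum : ∑ i, pderiv i p * d i ∈ I := Ideal.sum_mem _ fun i _ => I.mul_mem_left _ (hd i)
    have hsq : (∑ i, pderiv i p * d i) * d j ∈ I ^ 2 := pow_two I ▸ Ideal.mul_mem_mul hsum (hd j)
    have hderiv : ∑ i, pderiv i (p * X j) * d i = X j * ∑ i, pderiv i p * d i + p * d j := by
      simp [Pi.single_apply, add_mul, ite_mul, Finset.sum_add_distrib, Finset.mul_sum, mul_assoc,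
        add_comm]
    convert add_mem (Ideal.mul_mem_right (X j + d j) _ hp) hsq using 1
    rw [hderiv, map_mul, aeval_X]
    ring

noncomputable def jacobian {ι : Type*} (f : ι → MvPolynomial σ R) :
    Matrix ι σ (MvPolynomial σ R) :=
  .of fun j i => pderiv i (f j)

theorem formallySmooth_quotient_of_jacobian_mul_sub_one_mem {ι : Type*} [Fintype σ] [Fintype ι]
    [DecidableEq ι] (f : ι → MvPolynomial σ R) (N : Matrix σ ι (MvPolynomial σ R))
    (hN : ∀ j k, (jacobian f * N - 1 : Matrix ι ι _) j k ∈ Ideal.span (Set.range f)) :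
    Algebra.FormallySmooth R (MvPolynomial σ R ⧸ Ideal.span (Set.range f)) := by
  set I := Ideal.span (Set.range f)
  have hf (k : ι) : f k ∈ I := Ideal.subset_span (Set.mem_range_self k)
  set d : σ → MvPolynomial σ R := -(N *ᵥ f)
  have hd (i : σ) : d i ∈ I :=
    neg_mem (Ideal.sum_mem _ fun k _ => I.mul_mem_left _ (hf k))
  have hnewton : f + jacobian f *ᵥ d = -((jacobian f * N - 1) *ᵥ f) := by
    simp only [d, Matrix.mulVec_neg, Matrix.mulVec_mulVec, Matrix.sub_mulVec, Matrix.one_mulVec]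
    abel
  refine Algebra.FormallySmooth.quotient_of_le_comap_sq I (aeval fun i => X i + d i)
    (Ideal.span_le.mpr ?_) (algHom_ext fun i => ?_)
  · rintro _ ⟨j, rfl⟩
    have hj : f j + ∑ i, pderiv i (f j) * d i ∈ I ^ 2 := by
      rw [show f j + ∑ i, pderiv i (f j) * d i = _ from congrFun hnewton j, Pi.neg_apply]
      exact neg_mem (Ideal.sum_mem _ fun k _ => pow_two I ▸ Ideal.mul_mem_mul (hN j k) (hf k))
    simpa using add_mem (aeval_X_add_sub_sub_sum_pderiv_mem_sq hd (f j)) hj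
  · simpa [Ideal.Quotient.eq_zero_iff_mem] using hd i

end MvPolynomial

theorem natCast_mul_pow_sub_one_mul {R : Type*} [CommSemiring R] (x : R) (n : ℕ) :
    (n : R) * x ^ (n - 1) * x = n * x ^ n := by
  cases n <;> simp [pow_succ, mul_assoc]

namespace RankTwoCluster

variable {K : Type*} [CommRing K]

noncomputable def relations (a b : ℕ) : Fin 2 → MvPolynomial (Fin 4) K :=
  ![X 0 * X 2 - 1 - X 1 ^ a, X 1 * X 3 - 1 - X 0 ^ b]

noncomputable def jacobianRightInverse (a b : ℕ) (c : K) :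
    Matrix (Fin 4) (Fin 2) (MvPolynomial (Fin 4) K) :=
  let A : MvPolynomial (Fin 4) K := a
  let B : MvPolynomial (Fin 4) K := b
  (C c : MvPolynomial (Fin 4) K) • !![-(1 + X 0 ^ b) * X 0, A * X 0;
    B * X 1, -(1 + X 1 ^ a) * X 1;
    A * B * X 2 + X 1 * X 2 * X 3, -(1 + X 1 ^ a) * A * X 2;
    -(1 + X 0 ^ b) * B * X 3, A * B * X 3 + X 0 * X 2 * X 3]

theorem range_relations (a b : ℕ) :
    Set.range (relations (K := K) a b) = {X 0 * X 2 - 1 - X 1 ^ a, X 1 * X 3 - 1 - X 0 ^ b} :=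
  Matrix.range_cons_cons_empty _ _ _

theorem formallySmooth {a b : ℕ} {c : K} (hc : c * a * b = 1) :
    Algebra.FormallySmooth K (MvPolynomial (Fin 4) K ⧸ Ideal.span (Set.range (relations a b))) := by
  refine formallySmooth_quotient_of_jacobian_mul_sub_one_mem _ (jacobianRightInverse a b c)
    fun j k => ?_
  rw [range_relations, Ideal.mem_span_pair, Matrix.sub_apply, Matrix.mul_apply, Fin.sum_univ_four]
  have hC : (C c : MvPolynomial (Fin 4) K) * a * b = 1 := by
    simpa only [map_mul, map_natCast, map_one] using congrArg (C : K → MvPolynomial (Fin 4) K) hc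
  have hpow_a := natCast_mul_pow_sub_one_mul (X 1 : MvPolynomial (Fin 4) K) a
  have hpow_b := natCast_mul_pow_sub_one_mul (X 0 : MvPolynomial (Fin 4) K) b
  fin_cases j <;> fin_cases k <;>
    simp only [jacobian, relations, jacobianRightInverse, Fin.isValue, Fin.zero_eta, Fin.mk_one,
      Matrix.of_apply, Matrix.cons_val_zero, Matrix.cons_val_one, Matrix.cons_val_fin_one,
      Matrix.cons_val', Matrix.cons_val, Matrix.smul_of, Matrix.smul_cons, Matrix.smul_empty,
      Matrix.one_apply_eq, Matrix.one_apply_ne, ne_eq, Fin.reduceEq, not_false_eq_true,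
      one_ne_zero, zero_ne_one, map_sub, Derivation.leibniz, Derivation.leibniz_pow,
      Derivation.map_one_eq_zero, pderiv_X, Pi.single_eq_of_ne, Pi.single_eq_same, smul_eq_mul,
      nsmul_eq_mul, mul_zero, mul_one, zero_mul, zero_add, add_zero, sub_zero,
      sub_self, zero_sub, neg_add_rev, neg_mul] <;>
    set u : MvPolynomial (Fin 4) K := C c
  · exact ⟨1, u * X 0 * X 2, by
      linear_combination (-(X 0 * X 2 - X 1 ^ a)) * hC + u * b * hpow_a⟩
  · exact ⟨-(u * (a : MvPolynomial (Fin 4) K) * X 1 ^ a), 0, by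
      linear_combination (-(u * (X 1 ^ a + 1))) * hpow_a⟩
  · exact ⟨0, -(u * (b : MvPolynomial (Fin 4) K) * X 0 ^ b), by
      linear_combination (-(u * (X 0 ^ b + 1))) * hpow_b⟩
  · exact ⟨u * X 1 * X 3, 1, by
      linear_combination (-(X 1 * X 3 - X 0 ^ b)) * hC + u * a * hpow_b⟩

end RankTwoCluster

theorem stmt4_general (K : Type) [Field K] [CharZero K]
    (a b : ℕ) (ha : 0 < a) (hb : 0 < b) :
    Algebra.Smooth K
      (MvPolynomial (Fin 4) K ⧸
        Ideal.span ({X 0 * X 2 - 1 - X 1 ^ a, X 1 * X 3 - 1 - X 0 ^ b} :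
          Set (MvPolynomial (Fin 4) K))) := by
  have hab : (a : K) * b ≠ 0 :=
    mul_ne_zero (Nat.cast_ne_zero.mpr ha.ne') (Nat.cast_ne_zero.mpr hb.ne')
  rw [← RankTwoCluster.range_relations]
  refine ⟨RankTwoCluster.formallySmooth (c := ((a : K) * b)⁻¹) ?_, ?_⟩
  · rw [mul_assoc, inv_mul_cancel₀ hab]
  · exact Algebra.FinitePresentation.quotient (Submodule.fg_span (Set.toFinite _))

/-- For all positive integers `a` and `b`, the `K`-algebra
`R(a,b) = K[x₁,x₂,x₃,x₄]/(x₁x₃ − 1 − x₂^a, x₂x₄ − 1 − x₁^b)` is a smooth `K`-algebra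
(of finite presentation and formally smooth). -/
theorem stmt4 (K : Type) [Field K] [IsAlgClosed K] [CharZero K]
    (a b : ℕ) (ha : 0 < a) (hb : 0 < b) :
    Algebra.Smooth K
      (MvPolynomial (Fin 4) K ⧸
        Ideal.span ({X 0 * X 2 - 1 - X 1 ^ a, X 1 * X 3 - 1 - X 0 ^ b} :
          Set (MvPolynomial (Fin 4) K))) :=
  stmt4_general K a b ha hb
end

section
/- Let F be the fraction field of the polynomial ring K[x,y], and let ψ : K[x₁,x₂,x₃,x₄] → F be the K-algebra homomorphism determined by x₁ ↦ x, x₂ ↦ y, x₃ ↦ (1 + y^a)/x, x₄ ↦ (1 + x^b)/y. Then the kernel of ψ equals the ideal generated by x₁x₃ − 1 − x₂^a and x₂x₄ − 1 − x₁^b. -/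
/-!
Adjoin `x₃` and then `x₄` one variable at a time. If `φ : R →+* S` has kernel `J` and
`v * φ x = φ f`, where `J + (x)` is a prime ideal not containing `f`, then the kernel of
`R[T] → S, T ↦ v` is `J[T] + (x T - f)`: for `p` in that kernel, `x ^ deg p * p(f / x)` lies in
`J` and is congruent to `lead p * f ^ deg p` modulo `x`, so the leading coefficient of `p` lies in
`J + (x)` and can be cancelled modulo `J[T] + (x T - f)`. The prime ideal needed at the second step,
`(x₁ x₃ - 1 - x₂ ^ a, x₂)`, is itself such a kernel, for `x₂ ↦ 0, x₃ ↦ 1 / x₁`.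
-/

namespace MvPolynomial

variable {σ R : Type*} [CommRing R]

open Classical in
noncomputable def killVars (s : Set σ) : MvPolynomial σ R →ₐ[R] MvPolynomial σ R :=
  aeval fun i ↦ if i ∈ s then 0 else X i

open Classical in
theorem killVars_X (s : Set σ) (i : σ) :
    killVars (R := R) s (X i) = if i ∈ s then 0 else X i :=
  aeval_X _ _

theorem sub_killVars_mem_span_X_image (s : Set σ) (p : MvPolynomial σ R) :
    p - killVars s p ∈ Ideal.span (X '' s) := by
  induction p using MvPolynomial.induction_on with
  | C r => simp
  | add p q hp hq => simpa [add_sub_add_comm] using Ideal.add_mem _ hp hq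
  | mul_X p i hp =>
    by_cases hi : i ∈ s
    · simpa [killVars, hi] using
        Ideal.mul_mem_left _ p (Ideal.subset_span (Set.mem_image_of_mem X hi))
    · simpa [killVars, hi, sub_mul] using Ideal.mul_mem_right (X i) _ hp

theorem ker_killVars (s : Set σ) :
    RingHom.ker (killVars (R := R) s) = Ideal.span (X '' s) := by
  refine le_antisymm (fun p hp ↦ ?_) (Ideal.span_le.mpr ?_)
  · simpa [RingHom.mem_ker.mp hp] using sub_killVars_mem_span_X_image s p
  · rintro _ ⟨i, hi, rfl⟩
    simp [RingHom.mem_ker, killVars, hi]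

theorem ker_comp_killVars {S : Type*} [Semiring S] {f : MvPolynomial σ R →+* S}
    (hf : Function.Injective f) (s : Set σ) :
    RingHom.ker (f.comp (killVars s).toRingHom) = Ideal.span (X '' s) := by
  rw [RingHom.ker_comp_of_injective _ hf]
  exact ker_killVars s

theorem isPrime_span_X_image [IsDomain R] (s : Set σ) :
    (Ideal.span (X '' s : Set (MvPolynomial σ R))).IsPrime :=
  ker_killVars (R := R) s ▸ RingHom.ker_isPrime _

theorem constantCoeff_eq_zero_of_mem_span_X_image {s : Set σ} {p : MvPolynomial σ R}
    (hp : p ∈ Ideal.span (X '' s)) : constantCoeff p = 0 := by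
  refine (Ideal.span_le (I := RingHom.ker constantCoeff)).mpr ?_ hp
  rintro _ ⟨i, -, rfl⟩
  simp [RingHom.mem_ker]

theorem one_add_X_pow_notMem_span_X_image [Nontrivial R] {a : ℕ} (ha : 0 < a) (i : σ)
    (s : Set σ) :
    1 + X i ^ a ∉ Ideal.span (X '' s : Set (MvPolynomial σ R)) := fun h ↦ by
  simpa [ha.ne'] using constantCoeff_eq_zero_of_mem_span_X_image h

end MvPolynomial

namespace Polynomial

theorem dvd_eval_scaleRoots_sub {R : Type*} [CommRing R] (p : R[X]) (s r : R) :
    s ∣ (p.scaleRoots s).eval r - p.leadingCoeff * r ^ p.natDegree := by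
  rw [eval_eq_sum_range, natDegree_scaleRoots, Finset.sum_range_succ, coeff_scaleRoots,
    Nat.sub_self, pow_zero, mul_one, ← leadingCoeff, add_sub_cancel_right]
  refine Finset.dvd_sum fun i hi ↦ ?_
  rw [coeff_scaleRoots]
  exact (dvd_pow_self s (Nat.sub_ne_zero_of_lt (Finset.mem_range.mp hi))).mul_left _ |>.mul_right _

variable {R S : Type*} [CommRing R] [CommRing S] {φ : R →+* S} {x f : R} {v : S}

theorem le_ker_eval₂RingHom (hv : v * φ x = φ f) :
    (RingHom.ker φ).map C ⊔ Ideal.span {C x * X - C f} ≤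
      RingHom.ker (eval₂RingHom φ v) := by
  refine sup_le (Ideal.map_le_iff_le_comap.mpr fun r hr ↦ ?_) (Ideal.span_le.mpr ?_)
  · simpa [RingHom.mem_ker] using hr
  · rintro _ rfl
    simp [RingHom.mem_ker, mul_comm (φ x), hv]

theorem leadingCoeff_mem_ker_sup_of_eval₂_eq_zero (hv : v * φ x = φ f)
    (hprime : (RingHom.ker φ ⊔ Ideal.span {x}).IsPrime)
    (hf : f ∉ RingHom.ker φ ⊔ Ideal.span {x})
    {p : R[X]} (hp : p.eval₂ φ v = 0) :
    p.leadingCoeff ∈ RingHom.ker φ ⊔ Ideal.span {x} := by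
  have hker : (p.scaleRoots x).eval f ∈ RingHom.ker φ := by
    rw [RingHom.mem_ker, ← eval₂_at_apply, ← hv, mul_comm, scaleRoots_eval₂_eq_zero φ hp]
  have hdvd := Ideal.mem_span_singleton.mpr (dvd_eval_scaleRoots_sub p x f)
  have hmul : p.leadingCoeff * f ^ p.natDegree ∈ RingHom.ker φ ⊔ Ideal.span {x} := by
    simpa using Ideal.sub_mem _ (Ideal.mem_sup_left hker) (Ideal.mem_sup_right hdvd)
  exact (hprime.mem_or_mem hmul).resolve_right fun h ↦ hf (hprime.mem_of_pow_mem _ h)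

theorem ker_eval₂RingHom_eq_sup (hv : v * φ x = φ f)
    (hprime : (RingHom.ker φ ⊔ Ideal.span {x}).IsPrime)
    (hf : f ∉ RingHom.ker φ ⊔ Ideal.span {x}) :
    RingHom.ker (eval₂RingHom φ v) = (RingHom.ker φ).map C ⊔ Ideal.span {C x * X - C f} := by
  refine le_antisymm (fun p hp ↦ ?_) (le_ker_eval₂RingHom hv)
  induction hN : p.natDegree using Nat.strong_induction_on generalizing p with | _ N ih
  rcases N with _ | n
  · rw [eq_C_of_natDegree_eq_zero hN] at hp ⊢
    exact Ideal.mem_sup_left (Ideal.mem_map_of_mem _ (by simpa [RingHom.mem_ker] using hp))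
  obtain ⟨j, hj, _, hc, hjc⟩ := Submodule.mem_sup.mp <|
    leadingCoeff_mem_ker_sup_of_eval₂_eq_zero hv hprime hf (RingHom.mem_ker.mp hp)
  obtain ⟨c, rfl⟩ := Ideal.mem_span_singleton'.mp hc
  set w := C j * X ^ (n + 1) + C c * X ^ n * (C x * X - C f)
  have hw : w ∈ (RingHom.ker φ).map C ⊔ Ideal.span {C x * X - C f} :=
    Ideal.add_mem _ (Ideal.mem_sup_left (Ideal.mul_mem_right _ _ (Ideal.mem_map_of_mem _ hj)))
      (Ideal.mem_sup_right (Ideal.mul_mem_left _ _ (Ideal.mem_span_singleton_self _)))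
  have hpw : p - w = p.eraseLead + C (c * f) * X ^ n := by
    conv_lhs => rw [← p.eraseLead_add_C_mul_X_pow, hN, ← hjc]
    simp only [w, map_add, map_mul]
    ring
  have hdeg : (p - w).natDegree < n + 1 := by
    rw [hpw, Nat.lt_succ_iff]
    refine natDegree_add_le_of_degree_le ?_ (natDegree_C_mul_X_pow_le _ _)
    simpa [hN] using p.eraseLead_natDegree_le
  have := ih _ hdeg _ (Ideal.sub_mem _ hp (le_ker_eval₂RingHom hv hw)) rfl
  simpa using Ideal.add_mem _ this hw

end Polynomial

open MvPolynomial
open scoped Polynomial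

namespace ClusterVariety

section Tower

variable (K : Type*) [CommRing K]

noncomputable def toTower : MvPolynomial (Fin 4) K →ₐ[K] (MvPolynomial (Fin 2) K)[X][X] :=
  aeval ![Polynomial.C (Polynomial.C (X 0)), Polynomial.C (Polynomial.C (X 1)),
    Polynomial.C Polynomial.X, Polynomial.X]

noncomputable def ofTower : (MvPolynomial (Fin 2) K)[X][X] →ₐ[K] MvPolynomial (Fin 4) K :=
  Polynomial.aevalTower (Polynomial.aevalTower (rename ![0, 1]) (X 2)) (X 3)

theorem leftInverse_ofTower_toTower : Function.LeftInverse (ofTower K) (toTower K) :=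
  AlgHom.congr_fun (φ₁ := (ofTower K).comp (toTower K)) (φ₂ := AlgHom.id K _) <| by
    ext i
    fin_cases i <;> simp [ofTower, toTower]

theorem map_ofTower_span (a b : ℕ) :
    (Ideal.span {Polynomial.C (Polynomial.C (X 0) * Polynomial.X - Polynomial.C (1 + X 1 ^ a)),
        Polynomial.C (Polynomial.C (X 1)) * Polynomial.X -
          Polynomial.C (Polynomial.C (1 + X 0 ^ b))}).map (ofTower K) =
      Ideal.span {X 0 * X 2 - 1 - X 1 ^ a, X 1 * X 3 - 1 - X 0 ^ b} := by
  have h₁ : ofTower K (Polynomial.C (Polynomial.C (X 0) * Polynomial.X -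
      Polynomial.C (1 + X 1 ^ a))) =
      X 0 * X 2 - 1 - X 1 ^ a := by
    simp [ofTower]
    ring
  have h₂ : ofTower K (Polynomial.C (Polynomial.C (X 1)) * Polynomial.X -
      Polynomial.C (Polynomial.C (1 + X 0 ^ b))) =
      X 1 * X 3 - 1 - X 0 ^ b := by
    rw [map_sub (ofTower K), map_mul (ofTower K)]
    simp [ofTower]
    ring
  rw [Ideal.map_span, Set.image_pair, h₁, h₂]

end Tower

variable {K F : Type*} [CommRing K] [Field F] [Algebra (MvPolynomial (Fin 2) K) F] {a b : ℕ}

local notation "ι" => algebraMap (MvPolynomial (Fin 2) K) F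

variable (F a b) in
noncomputable def towerEval : (MvPolynomial (Fin 2) K)[X][X] →+* F :=
  Polynomial.eval₂RingHom (Polynomial.eval₂RingHom ι (ι (1 + X 1 ^ a) / ι (X 0)))
    (ι (1 + X 0 ^ b) / ι (X 1))

theorem aeval_eq_towerEval_comp_toTower [Algebra K F] [IsScalarTower K (MvPolynomial (Fin 2) K) F] :
    ((aeval ![ι (X 0), ι (X 1), (1 + ι (X 1) ^ a) / ι (X 0), (1 + ι (X 0) ^ b) / ι (X 1)] :
      MvPolynomial (Fin 4) K →ₐ[K] F) : MvPolynomial (Fin 4) K →+* F) =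
      (towerEval F a b).comp (toTower K).toRingHom := by
  refine MvPolynomial.ringHom_ext (fun r ↦ ?_) (fun i ↦ ?_)
  · simp [towerEval, toTower, IsScalarTower.algebraMap_apply K (MvPolynomial (Fin 2) K) F]
  · fin_cases i <;> simp [towerEval, toTower]

variable [IsDomain K]

theorem ker_eval₂RingHom_algebraMap (hinj : Function.Injective ι) (ha : 0 < a) :
    RingHom.ker (Polynomial.eval₂RingHom ι (ι (1 + X 1 ^ a) / ι (X 0))) =
      Ideal.span {Polynomial.C (X 0) * Polynomial.X - Polynomial.C (1 + X 1 ^ a)} := by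
  have hX0 : ι (X 0) ≠ 0 := (map_ne_zero_iff _ hinj).mpr (X_ne_zero 0)
  have hker : RingHom.ker ι = ⊥ := (RingHom.injective_iff_ker_eq_bot _).mp hinj
  have hP : RingHom.ker ι ⊔ Ideal.span {X 0} = Ideal.span (X '' {0}) := by
    rw [hker, bot_sup_eq, Set.image_singleton]
  rw [Polynomial.ker_eval₂RingHom_eq_sup (div_mul_cancel₀ _ hX0)
      (hP ▸ isPrime_span_X_image _) (hP ▸ one_add_X_pow_notMem_span_X_image ha _ _),
    hker, Ideal.map_bot, bot_sup_eq]

theorem ker_eval₂RingHom_comp_killVars (hinj : Function.Injective ι) (ha : 0 < a) :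
    RingHom.ker (Polynomial.eval₂RingHom ((ι).comp (killVars {(1 : Fin 2)}).toRingHom)
        (ι (X 0))⁻¹) =
      Ideal.span {Polynomial.C (X 0) * Polynomial.X - Polynomial.C (1 + X 1 ^ a)} ⊔
        Ideal.span {Polynomial.C (X 1)} := by
  have hX0 : ι (X 0) ≠ 0 := (map_ne_zero_iff _ hinj).mpr (X_ne_zero 0)
  have hker := ker_comp_killVars hinj {(1 : Fin 2)}
  have hP : RingHom.ker ((ι).comp (killVars {(1 : Fin 2)}).toRingHom) ⊔ Ideal.span {X 0} =
      Ideal.span (X '' {1, 0}) := by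
    rw [hker, ← Ideal.span_union, Set.image_singleton, Set.singleton_union, Set.image_pair]
  have hv : (ι (X 0))⁻¹ * ((ι).comp (killVars {(1 : Fin 2)}).toRingHom) (X 0) =
      ((ι).comp (killVars {(1 : Fin 2)}).toRingHom) (1 + X 1 ^ a) := by
    simp [killVars_X, inv_mul_cancel₀ hX0, ha.ne']
  rw [Polynomial.ker_eval₂RingHom_eq_sup hv
      (hP ▸ isPrime_span_X_image _) (hP ▸ one_add_X_pow_notMem_span_X_image ha _ _),
    hker, Ideal.map_span, Set.image_singleton, Set.image_singleton, sup_comm]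

theorem ker_towerEval (hinj : Function.Injective ι) (ha : 0 < a) (hb : 0 < b) :
    RingHom.ker (towerEval F a b) =
      Ideal.span {Polynomial.C (Polynomial.C (X 0 : MvPolynomial (Fin 2) K) * Polynomial.X -
          Polynomial.C (1 + X 1 ^ a)),
        Polynomial.C (Polynomial.C (X 1)) * Polynomial.X -
          Polynomial.C (Polynomial.C (1 + X 0 ^ b))} := by
  have hX1 : ι (X 1) ≠ 0 := (map_ne_zero_iff _ hinj).mpr (X_ne_zero 1)
  have hv : ι (1 + X 0 ^ b) / ι (X 1) *
      Polynomial.eval₂RingHom ι (ι (1 + X 1 ^ a) / ι (X 0)) (Polynomial.C (X 1)) =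
      Polynomial.eval₂RingHom ι (ι (1 + X 1 ^ a) / ι (X 0)) (Polynomial.C (1 + X 0 ^ b)) := by
    simp only [Polynomial.coe_eval₂RingHom, Polynomial.eval₂_C, div_mul_cancel₀ _ hX1]
  have hP : RingHom.ker (Polynomial.eval₂RingHom ι (ι (1 + X 1 ^ a) / ι (X 0))) ⊔
      Ideal.span {Polynomial.C (X 1)} =
      RingHom.ker (Polynomial.eval₂RingHom ((ι).comp (killVars {(1 : Fin 2)}).toRingHom)
        (ι (X 0))⁻¹) := by
    rw [ker_eval₂RingHom_algebraMap hinj ha, ker_eval₂RingHom_comp_killVars hinj ha]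
  have hf : Polynomial.C (1 + X 0 ^ b) ∉
      RingHom.ker (Polynomial.eval₂RingHom ((ι).comp (killVars {(1 : Fin 2)}).toRingHom)
        (ι (X 0))⁻¹) := by
    rw [RingHom.mem_ker, Polynomial.coe_eval₂RingHom, Polynomial.eval₂_C, ← RingHom.mem_ker,
      ker_comp_killVars hinj]
    exact one_add_X_pow_notMem_span_X_image hb 0 _
  rw [towerEval, Polynomial.ker_eval₂RingHom_eq_sup hv (hP ▸ RingHom.ker_isPrime _) (hP ▸ hf),
    ker_eval₂RingHom_algebraMap hinj ha, Ideal.map_span, Set.image_singleton,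
    ← Ideal.span_insert]

end ClusterVariety

open ClusterVariety in
theorem stmt5_general (K : Type*) [Field K]
    (a b : ℕ) (ha : 0 < a) (hb : 0 < b)
    (F : Type*) [Field F] [Algebra (MvPolynomial (Fin 2) K) F]
    [IsFractionRing (MvPolynomial (Fin 2) K) F]
    [Algebra K F] [IsScalarTower K (MvPolynomial (Fin 2) K) F]
    (x y : F)
    (hx : x = algebraMap (MvPolynomial (Fin 2) K) F (X 0))
    (hy : y = algebraMap (MvPolynomial (Fin 2) K) F (X 1))
    (ψ : MvPolynomial (Fin 4) K →ₐ[K] F)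
    (hψ : ψ = aeval ![x, y, (1 + y ^ a) / x, (1 + x ^ b) / y]) :
    RingHom.ker (ψ : MvPolynomial (Fin 4) K →+* F) =
      Ideal.span ({X 0 * X 2 - 1 - X 1 ^ a, X 1 * X 3 - 1 - X 0 ^ b} :
        Set (MvPolynomial (Fin 4) K)) := by
  subst hx hy hψ
  have hinj := IsFractionRing.injective (MvPolynomial (Fin 2) K) F
  refine le_antisymm ?_ (Ideal.span_le.mpr ?_)
  · rw [aeval_eq_towerEval_comp_toTower, ← RingHom.comap_ker, ker_towerEval hinj ha hb]
    exact (Ideal.comap_le_map_of_inverse _ _ _ (leftInverse_ofTower_toTower K)).trans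
      (map_ofTower_span K a b).le
  · have hx0 := (map_ne_zero_iff _ hinj).mpr (X_ne_zero (R := K) (0 : Fin 2))
    have hy0 := (map_ne_zero_iff _ hinj).mpr (X_ne_zero (R := K) (1 : Fin 2))
    rintro _ (rfl | rfl) <;> simp [mul_div_cancel₀ _ hx0, mul_div_cancel₀ _ hy0]

/-- Let `F` be the fraction field of `K[x,y]` and `ψ : K[x₁,x₂,x₃,x₄] → F` the
`K`-algebra homomorphism with `x₁ ↦ x`, `x₂ ↦ y`, `x₃ ↦ (1 + y^a)/x`, `x₄ ↦ (1 + x^b)/y`.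
Then `ker ψ = (x₁x₃ − 1 − x₂^a, x₂x₄ − 1 − x₁^b)`. -/
theorem stmt5 (K : Type*) [Field K] [IsAlgClosed K] [CharZero K]
    (a b : ℕ) (ha : 0 < a) (hb : 0 < b)
    (F : Type*) [Field F] [Algebra (MvPolynomial (Fin 2) K) F]
    [IsFractionRing (MvPolynomial (Fin 2) K) F]
    [Algebra K F] [IsScalarTower K (MvPolynomial (Fin 2) K) F]
    (x y : F)
    (hx : x = algebraMap (MvPolynomial (Fin 2) K) F (X 0))
    (hy : y = algebraMap (MvPolynomial (Fin 2) K) F (X 1))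
    (ψ : MvPolynomial (Fin 4) K →ₐ[K] F)
    (hψ : ψ = aeval ![x, y, (1 + y ^ a) / x, (1 + x ^ b) / y]) :
    RingHom.ker (ψ : MvPolynomial (Fin 4) K →+* F) =
      Ideal.span ({X 0 * X 2 - 1 - X 1 ^ a, X 1 * X 3 - 1 - X 0 ^ b} :
        Set (MvPolynomial (Fin 4) K)) :=
  stmt5_general K a b ha hb F x y hx hy ψ hψ
end

section
/- For all positive integers a and b, the ring R(a,b) = K[x₁,x₂,x₃,x₄]/(x₁x₃ − 1 − x₂^a, x₂x₄ − 1 − x₁^b) is an integral domain; equivalently, the ideal of K[x₁,x₂,x₃,x₄] generated by x₁x₃ − 1 − x₂^a and x₂x₄ − 1 − x₁^b is prime. -/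
/-!
The `R`-algebra map `x₀ ↦ u, x₁ ↦ w, x₂ ↦ (1 + w^a)/u, x₃ ↦ (1 + u^b)/w` into the fraction field
of `R[u, w]` kills both generators of the ideal `I`, so it suffices to show that its kernel is no
larger than `I`. Modulo `I`, every polynomial times a power of `x₀x₁` is congruent to a polynomial
in `x₀, x₁` alone, on which the map is injective; so it remains to see that `x₀` and `x₁` are
nonzerodivisors modulo `I`. For `x₀`, setting `x₀ = 0` turns the generators into `-(1 + x₁^a)` and
the prime `x₁x₃ - 1`, which share no factor; for `x₁` it follows from the symmetry
`x₀ ↔ x₁, x₂ ↔ x₃, a ↔ b`.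
-/

open MvPolynomial

section PrimeBinomial

variable {σ R : Type*} [CommRing R] [IsDomain R]

theorem Polynomial.prime_C_mul_X_sub_one {r : R} (hr : r ≠ 0) :
    Prime (Polynomial.C r * Polynomial.X - 1) := by
  have hne : (Polynomial.C r * Polynomial.X - 1 : Polynomial R) ≠ 0 := fun h => by
    simpa using congrArg (Polynomial.eval 0) h
  rw [← Ideal.span_singleton_prime hne, ← Ideal.Quotient.isDomain_iff_prime]
  have : IsDomain (Localization.Away r) :=
    IsLocalization.isDomain_localization (powers_le_nonZeroDivisors_of_noZeroDivisors hr)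
  exact (Localization.awayEquivAdjoin r).symm.toMulEquiv.isDomain _

theorem MvPolynomial.prime_X_mul_X_sub_one {i j : σ} (hij : i ≠ j) :
    Prime (X i * X j - 1 : MvPolynomial σ R) := by
  classical
  let j' : {k // k ≠ i} := ⟨j, hij.symm⟩
  have hrename : renameEquiv R (Equiv.optionSubtypeNe i) (X none * X (some j') - 1) =
      X i * X j - 1 := by
    simp [j']
  have hoption : optionEquivLeft R _ (X none * X (some j') - 1) =
      Polynomial.C (X j') * Polynomial.X - 1 := by
    rw [map_sub, map_mul, map_one, optionEquivLeft_X_none, optionEquivLeft_X_some, mul_comm]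
  rw [← hrename, MulEquiv.prime_iff, ← MulEquiv.prime_iff (optionEquivLeft R _), hoption]
  exact Polynomial.prime_C_mul_X_sub_one (X_ne_zero j')

end PrimeBinomial

theorem MvPolynomial.X_dvd_sub_aeval_update_zero {σ R : Type*} [CommRing R] [DecidableEq σ]
    (i : σ) (f : MvPolynomial σ R) : X i ∣ f - aeval (Function.update X i 0) f := by
  induction f using MvPolynomial.induction_on with
  | C c => simp
  | add p q hp hq => simpa [add_sub_add_comm] using dvd_add hp hq
  | mul_X p j hp =>
    rcases eq_or_ne j i with rfl | hji
    · simp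
    · have : p * X j - aeval (Function.update X i 0) (p * X j) =
          (p - aeval (Function.update X i 0) p) * X j := by
        simp [Function.update_of_ne hji, sub_mul]
      exact this ▸ hp.mul_right _

section ClusterIdeal

variable (R : Type*) [CommRing R] (a b : ℕ)

noncomputable def clusterIdeal : Ideal (MvPolynomial (Fin 4) R) :=
  Ideal.span {X 0 * X 2 - 1 - X 1 ^ a, X 1 * X 3 - 1 - X 0 ^ b}

variable {R a b}

theorem mem_clusterIdeal_of_X_zero_mul_mem [IsDomain R] [CharZero R] (hb : 0 < b)
    {f : MvPolynomial (Fin 4) R} (hf : X 0 * f ∈ clusterIdeal R a b) :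
    f ∈ clusterIdeal R a b := by
  obtain ⟨g, h, hgh⟩ := Ideal.mem_span_pair.mp hf
  let s := aeval (R := R) (Function.update (X : Fin 4 → MvPolynomial (Fin 4) R) 0 0)
  have hs : (X 1 * X 3 - 1) * s h = (1 + X 1 ^ a) * s g := by
    have hs₁ : s (X 0 * X 2 - 1 - X 1 ^ a) = -1 - X 1 ^ a := by simp [s]
    have hs₂ : s (X 1 * X 3 - 1 - X 0 ^ b) = X 1 * X 3 - 1 := by simp [s, hb.ne']
    have hs₀ : s (X 0) = 0 := by simp [s]
    have := congrArg s hgh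
    rw [map_add, map_mul, map_mul, map_mul, hs₁, hs₂, hs₀] at this
    linear_combination this
  have hp : Prime (X 1 * X 3 - 1 : MvPolynomial (Fin 4) R) := prime_X_mul_X_sub_one (by decide)
  have hndvd : ¬ X 1 * X 3 - 1 ∣ (1 + X 1 ^ a : MvPolynomial (Fin 4) R) := fun ⟨c, hc⟩ => by
    simpa using congrArg (eval fun _ => (1 : R)) hc
  obtain ⟨q, hq⟩ := (hp.dvd_or_dvd ⟨s h, hs.symm⟩).resolve_left hndvd
  have hsh : s h = (1 + X 1 ^ a) * q :=
    mul_left_cancel₀ hp.ne_zero (by linear_combination hs + (1 + X 1 ^ a) * hq)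
  obtain ⟨g', hg'⟩ := X_dvd_sub_aeval_update_zero 0 g
  obtain ⟨h', hh'⟩ := X_dvd_sub_aeval_update_zero 0 h
  obtain ⟨c, rfl⟩ := Nat.exists_eq_add_one_of_ne_zero hb.ne'
  refine Ideal.mem_span_pair.mpr
    ⟨q * X 0 ^ c + g', q * X 2 + h', mul_left_cancel₀ (X_ne_zero 0) ?_⟩
  -- the generators `f₁, f₂` satisfy `(x₁x₃ - 1) f₁ + (1 + x₁^a) f₂ = x₀ (x₀^(b-1) f₁ + x₂ f₂)`
  linear_combination hgh - (X 0 * X 2 - 1 - X 1 ^ a) * (hg' + hq) -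
    (X 1 * X 3 - 1 - X 0 ^ (c + 1)) * (hh' + hsh)

def clusterSwap : Fin 4 → Fin 4 := ![1, 0, 3, 2]

theorem rename_clusterSwap_mem {f : MvPolynomial (Fin 4) R} (hf : f ∈ clusterIdeal R a b) :
    rename clusterSwap f ∈ clusterIdeal R b a := by
  suffices clusterIdeal R a b ≤ (clusterIdeal R b a).comap (rename clusterSwap) from this hf
  refine Ideal.span_le.mpr ?_
  rintro _ (rfl | rfl)
  · exact Ideal.subset_span (by simp [clusterSwap])
  · exact Ideal.subset_span (by simp [clusterSwap])

theorem rename_clusterSwap_rename_clusterSwap (f : MvPolynomial (Fin 4) R) :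
    rename clusterSwap (rename clusterSwap f) = f := by
  rw [rename_rename, show clusterSwap ∘ clusterSwap = id by decide, rename_id_apply]

theorem mem_clusterIdeal_of_X_one_mul_mem [IsDomain R] [CharZero R] (ha : 0 < a)
    {f : MvPolynomial (Fin 4) R} (hf : X 1 * f ∈ clusterIdeal R a b) :
    f ∈ clusterIdeal R a b := by
  have := rename_clusterSwap_mem hf
  rw [map_mul, rename_X] at this
  rw [← rename_clusterSwap_rename_clusterSwap f]
  exact rename_clusterSwap_mem (mem_clusterIdeal_of_X_zero_mul_mem ha this)

theorem mem_clusterIdeal_of_pow_mul_mem [IsDomain R] [CharZero R] (ha : 0 < a) (hb : 0 < b)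
    {N : ℕ} {f : MvPolynomial (Fin 4) R} (hf : (X 0 * X 1) ^ N * f ∈ clusterIdeal R a b) :
    f ∈ clusterIdeal R a b := by
  induction N generalizing f with
  | zero => simpa using hf
  | succ N ih =>
    refine mem_clusterIdeal_of_X_one_mul_mem ha (mem_clusterIdeal_of_X_zero_mul_mem hb (ih ?_))
    convert hf using 1
    ring

theorem exists_pow_mul_X_sub_rename_mem_clusterIdeal (j : Fin 4) :
    ∃ (N : ℕ) (g : MvPolynomial (Fin 2) R),
      (X 0 * X 1) ^ N * X j - rename (Fin.castLE (by decide)) g ∈ clusterIdeal R a b := by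
  have h₁ : X 0 * X 2 - 1 - X 1 ^ a ∈ clusterIdeal R a b := Ideal.subset_span (by simp)
  have h₂ : X 1 * X 3 - 1 - X 0 ^ b ∈ clusterIdeal R a b := Ideal.subset_span (by simp)
  fin_cases j
  · exact ⟨0, X 0, by simp⟩
  · exact ⟨0, X 1, by simp⟩
  · refine ⟨1, X 1 * (1 + X 1 ^ a), ?_⟩
    convert Ideal.mul_mem_left _ (X 1) h₁ using 1
    simp
    ring
  · refine ⟨1, X 0 * (1 + X 0 ^ b), ?_⟩
    convert Ideal.mul_mem_left _ (X 0) h₂ using 1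
    simp
    ring

theorem exists_pow_mul_sub_rename_mem_clusterIdeal (f : MvPolynomial (Fin 4) R) :
    ∃ (N : ℕ) (g : MvPolynomial (Fin 2) R),
      (X 0 * X 1) ^ N * f - rename (Fin.castLE (by decide)) g ∈ clusterIdeal R a b := by
  let ι : MvPolynomial (Fin 2) R →ₐ[R] MvPolynomial (Fin 4) R := rename (Fin.castLE (by decide))
  have hι : ι (X 0 * X 1) = X 0 * X 1 := by simp [ι]
  let S : Subalgebra R (MvPolynomial (Fin 4) R) :=
    { carrier := {f | ∃ N g, (X 0 * X 1) ^ N * f - ι g ∈ clusterIdeal R a b}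
      algebraMap_mem' := fun r => ⟨0, C r, by simp [ι, algebraMap_eq]⟩
      add_mem' := by
        rintro f₁ f₂ ⟨N₁, g₁, h₁⟩ ⟨N₂, g₂, h₂⟩
        refine ⟨N₁ + N₂, (X 0 * X 1) ^ N₂ * g₁ + (X 0 * X 1) ^ N₁ * g₂, ?_⟩
        convert Ideal.add_mem _ (Ideal.mul_mem_left _ ((X 0 * X 1) ^ N₂) h₁)
          (Ideal.mul_mem_left _ ((X 0 * X 1) ^ N₁) h₂) using 1
        simp only [map_add, map_mul, map_pow, hι]
        ring
      mul_mem' := by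
        rintro f₁ f₂ ⟨N₁, g₁, h₁⟩ ⟨N₂, g₂, h₂⟩
        refine ⟨N₁ + N₂, g₁ * g₂, ?_⟩
        convert Ideal.add_mem _ (Ideal.mul_mem_right ((X 0 * X 1) ^ N₂ * f₂) _ h₁)
          (Ideal.mul_mem_left _ (ι g₁) h₂) using 1
        rw [map_mul]
        ring }
  have hS : S = ⊤ := eq_top_iff.mpr <| adjoin_range_X (R := R) (σ := Fin 4) ▸
    Algebra.adjoin_le (Set.range_subset_iff.mpr exists_pow_mul_X_sub_rename_mem_clusterIdeal)
  exact (hS ▸ Algebra.mem_top : f ∈ S)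

section Parametrization

variable [IsDomain R]

variable (R a b) in
noncomputable def clusterParam :
    MvPolynomial (Fin 4) R →ₐ[R] FractionRing (MvPolynomial (Fin 2) R) :=
  let u := algebraMap (MvPolynomial (Fin 2) R) (FractionRing _) (X 0)
  let w := algebraMap (MvPolynomial (Fin 2) R) (FractionRing _) (X 1)
  aeval ![u, w, (1 + w ^ a) / u, (1 + u ^ b) / w]

theorem clusterParam_comp_rename :
    (clusterParam R a b).comp (rename (Fin.castLE (by decide))) =
      IsScalarTower.toAlgHom R (MvPolynomial (Fin 2) R) (FractionRing _) := by
  ext i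
  fin_cases i <;> simp [clusterParam]

theorem clusterIdeal_le_ker : clusterIdeal R a b ≤ RingHom.ker (clusterParam R a b) := by
  have hX (i : Fin 2) :
      algebraMap (MvPolynomial (Fin 2) R) (FractionRing (MvPolynomial (Fin 2) R)) (X i) ≠ 0 :=
    (map_ne_zero_iff _ (IsFractionRing.injective _ _)).mpr (X_ne_zero i)
  refine Ideal.span_le.mpr ?_
  rintro _ (rfl | rfl)
  · simp [clusterParam, mul_div_cancel₀ _ (hX 0)]
  · simp [clusterParam, mul_div_cancel₀ _ (hX 1)]

theorem clusterIdeal_eq_ker [CharZero R] (ha : 0 < a) (hb : 0 < b) :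
    clusterIdeal R a b = RingHom.ker (clusterParam R a b) := by
  refine le_antisymm clusterIdeal_le_ker fun f hf => ?_
  obtain ⟨N, g, hg⟩ := exists_pow_mul_sub_rename_mem_clusterIdeal (a := a) (b := b) f
  have hg0 : g = 0 := by
    have := clusterIdeal_le_ker hg
    rw [RingHom.mem_ker, map_sub, map_mul, RingHom.mem_ker.mp hf, mul_zero, zero_sub, neg_eq_zero,
      ← AlgHom.comp_apply, clusterParam_comp_rename] at this
    exact (map_eq_zero_iff _ (IsFractionRing.injective _ _)).mp this
  rw [hg0, map_zero, sub_zero] at hg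
  exact mem_clusterIdeal_of_pow_mul_mem ha hb hg

end Parametrization

end ClusterIdeal

theorem stmt6_general (K : Type*) [Field K] [CharZero K]
    (a b : ℕ) (ha : 0 < a) (hb : 0 < b) :
    (Ideal.span ({X 0 * X 2 - 1 - X 1 ^ a, X 1 * X 3 - 1 - X 0 ^ b} :
      Set (MvPolynomial (Fin 4) K))).IsPrime := by
  rw [← clusterIdeal, clusterIdeal_eq_ker ha hb]
  exact RingHom.ker_isPrime _

/-- For all positive integers `a` and `b`, the ideal of `K[x₁,x₂,x₃,x₄]` generated by
`x₁x₃ − 1 − x₂^a` and `x₂x₄ − 1 − x₁^b` is prime; equivalently the quotient ring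
`R(a,b)` is an integral domain. -/
theorem stmt6 (K : Type*) [Field K] [IsAlgClosed K] [CharZero K]
    (a b : ℕ) (ha : 0 < a) (hb : 0 < b) :
    (Ideal.span ({X 0 * X 2 - 1 - X 1 ^ a, X 1 * X 3 - 1 - X 0 ^ b} :
      Set (MvPolynomial (Fin 4) K))).IsPrime :=
  stmt6_general K a b ha hb
end

section
/- The image of u in S is a prime element of S, where S is the localization of the polynomial ring K[u,v] away from the element uv − λ. -/
open MvPolynomial

/-! The prime ideal `(u)` of `K[u,v]` does not contain `uv - λ` (its constant term is `-λ ≠ 0`),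
so it survives in the localization away from `uv - λ`, where it is still principal,
generated by the image of `u`. -/

theorem Prime.algebraMap_of_disjoint {R S : Type*} [CommRing R] [CommRing S] [Algebra R S]
    {M : Submonoid R} [IsLocalization M S] (hM : M ≤ nonZeroDivisors R) {p : R} (hp : Prime p)
    (hpM : ∀ m ∈ M, ¬p ∣ m) : Prime (algebraMap R S p) := by
  have hdisj : Disjoint (M : Set R) (Ideal.span {p} : Set R) :=
    Set.disjoint_left.mpr fun m hm hmp ↦ hpM m hm (Ideal.mem_span_singleton.mp hmp)
  have hmap : (Ideal.span {algebraMap R S p}).IsPrime := by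
    simpa [Ideal.map_span] using IsLocalization.isPrime_of_isPrime_disjoint M S _
      ((Ideal.span_singleton_prime hp.ne_zero).mpr hp) hdisj
  have hne : algebraMap R S p ≠ 0 := fun h ↦
    hp.ne_zero (IsLocalization.injective S hM (h.trans (map_zero _).symm))
  exact (Ideal.span_singleton_prime hne).mp hmap

theorem Prime.algebraMap_away {R : Type*} [CommRing R] [IsDomain R] {p f : R} (hp : Prime p)
    (hpf : ¬p ∣ f) : Prime (algebraMap R (Localization.Away f) p) := by
  have hf : f ≠ 0 := by
    rintro rfl
    exact hpf (dvd_zero p)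
  refine hp.algebraMap_of_disjoint (powers_le_nonZeroDivisors_of_noZeroDivisors hf) ?_
  rintro _ ⟨n, rfl⟩ hpfn
  exact hpf (hp.dvd_of_dvd_pow hpfn)

theorem MvPolynomial.not_X_dvd_X_mul_X_sub_C {R σ : Type*} [CommRing R] (i j : σ) {l : R}
    (hl : l ≠ 0) : ¬(X i : MvPolynomial σ R) ∣ X i * X j - C l := by
  intro h
  obtain ⟨q, hq⟩ : (X i : MvPolynomial σ R) ∣ C l := by
    simpa using dvd_sub (dvd_mul_right (X i) (X j)) h
  exact hl (by simpa using congrArg constantCoeff hq)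

theorem stmt7_general (K : Type*) [Field K]
    (l : K) (hl : l ≠ 0) :
    Prime (algebraMap (MvPolynomial (Fin 2) K)
      (Localization.Away ((X 0 * X 1 - C l : MvPolynomial (Fin 2) K))) (X 0)) :=
  (X_prime (i := 0)).algebraMap_away (not_X_dvd_X_mul_X_sub_C 0 1 hl)

/-- The image of `u` is a prime element of the localization `S` of `K[u,v]`
away from the element `uv − λ`. -/
theorem stmt7 (K : Type*) [Field K] [IsAlgClosed K] [CharZero K]
    (l : K) (hl : l ≠ 0) :
    Prime (algebraMap (MvPolynomial (Fin 2) K)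
      (Localization.Away ((X 0 * X 1 - C l : MvPolynomial (Fin 2) K))) (X 0)) :=
  stmt7_general K l hl
end

section
/- The image of uv (equivalently, of (uv − λ) + λ, i.e. of the element x + λ) in S is not a prime element of S, where S is the localization of the polynomial ring K[u,v] away from the element uv − λ. -/
open MvPolynomial

/-- `φ` extends to the localization because `φ s` is a unit, and there `0 ∤ φ g`. -/
theorem IsLocalization.Away.not_algebraMap_dvd_of_map_eq_zero {R S K : Type*} [CommRing R]
    [CommRing S] [Algebra R S] [Field K] (s : R) [IsLocalization.Away s S] (φ : R →+* K)
    (hs : φ s ≠ 0) {f g : R} (hf : φ f = 0) (hg : φ g ≠ 0) :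
    ¬ algebraMap R S f ∣ algebraMap R S g := by
  intro hdvd
  have := map_dvd (IsLocalization.Away.lift s (Ne.isUnit hs)) hdvd
  rw [IsLocalization.Away.lift_eq, IsLocalization.Away.lift_eq, hf, zero_dvd_iff] at this
  exact hg this

theorem stmt8_general (K : Type*) [Field K]
    (l : K) (hl : l ≠ 0) :
    ¬ Prime (algebraMap (MvPolynomial (Fin 2) K)
      (Localization.Away ((X 0 * X 1 - C l : MvPolynomial (Fin 2) K))) (X 0 * X 1)) := by
  intro hp
  -- `u` and `v` stay nonzero at `(1, 0)` and `(0, 1)` respectively, where `uv - λ = -λ ≠ 0`.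
  rcases hp.dvd_or_dvd (map_mul (algebraMap _ _) (X 0) (X 1)).dvd with h | h
  · exact IsLocalization.Away.not_algebraMap_dvd_of_map_eq_zero (X 0 * X 1 - C l) (eval ![1, 0])
      (by simpa using hl) (by simp) (by simp) h
  · exact IsLocalization.Away.not_algebraMap_dvd_of_map_eq_zero (X 0 * X 1 - C l) (eval ![0, 1])
      (by simpa using hl) (by simp) (by simp) h

/-- The image of `uv` (i.e. of the element `x + λ` under `x = uv − λ`) is not a prime
element of the localization `S` of `K[u,v]` away from `uv − λ`. -/
theorem stmt8 (K : Type*) [Field K] [IsAlgClosed K] [CharZero K]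
    (l : K) (hl : l ≠ 0) :
    ¬ Prime (algebraMap (MvPolynomial (Fin 2) K)
      (Localization.Away ((X 0 * X 1 - C l : MvPolynomial (Fin 2) K))) (X 0 * X 1)) :=
  stmt8_general K l hl
end

section
/- Let F be the fraction field of the polynomial ring K[x,y] and let R ⊂ F be the K-subalgebra generated by x, x⁻¹, y, and (x+λ₁)(x+λ₂)/y. Then for every nonzero integer n, the element ((x+λ₁)/y)^n does not belong to R. -/
open MvPolynomial

/-! Every element `r` of `R` satisfies `r * x ^ a * y ^ b = f` for some `a, b` and some
`f ∈ J ^ b`, where `J = (y, (x + λ₁)(x + λ₂))`: each generator does, and the property is stable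
under sums and products. For `n = -m < 0` this gives `x ^ a * y ^ (m + b) = f * (x + λ₁) ^ m`,
impossible on the line `x = -λ₁`, where the left side is `(-λ₁) ^ a ≠ 0`. For `n = m > 0` it
gives `(x + λ₁) ^ m * x ^ a * y ^ b = f * y ^ m ∈ J ^ (b + 1)`; but restricting to the line
`x = -λ₂` sends `J` into `(y)` and the left side to a nonzero multiple of `y ^ b`. -/

def denominatorSubalgebra {K A F : Type*} [CommSemiring K] [CommSemiring A] [CommSemiring F]
    [Algebra K A] [Algebra A F] [Algebra K F] [IsScalarTower K A F] (J : Ideal A) (s : A) {t : A}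
    (ht : t ∈ J) : Subalgebra K F where
  carrier := {r | ∃ a b : ℕ, ∃ f ∈ J ^ b,
    r * algebraMap A F s ^ a * algebraMap A F t ^ b = algebraMap A F f}
  mul_mem' := by
    rintro r r' ⟨a, b, f, hf, hr⟩ ⟨a', b', f', hf', hr'⟩
    refine ⟨a + a', b + b', f * f', pow_add J b b' ▸ Ideal.mul_mem_mul hf hf', ?_⟩
    rw [map_mul, ← hr, ← hr']
    ring
  add_mem' := by
    rintro r r' ⟨a, b, f, hf, hr⟩ ⟨a', b', f', hf', hr'⟩
    have hmul {c d : ℕ} {g : A} (hg : g ∈ J ^ c) (u : A) : g * t ^ d * u ∈ J ^ (c + d) :=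
      Ideal.mul_mem_right u _ (pow_add J c d ▸ Ideal.mul_mem_mul hg (Ideal.pow_mem_pow ht d))
    refine ⟨a + a', b + b', f * t ^ b' * s ^ a' + f' * t ^ b * s ^ a,
      Ideal.add_mem _ (hmul hf _) (add_comm b' b ▸ hmul hf' _), ?_⟩
    simp only [map_add, map_mul, map_pow, ← hr, ← hr']
    ring
  algebraMap_mem' k := ⟨0, 0, algebraMap K A k, by simp [Ideal.one_eq_top],
    by simp [IsScalarTower.algebraMap_apply K A F]⟩

theorem adjoin_le_denominatorSubalgebra {K A F : Type*} [CommSemiring K] [CommSemiring A]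
    [Field F] [Algebra K A] [Algebra A F] [Algebra K F] [IsScalarTower K A F] {s t p : A}
    (hs : algebraMap A F s ≠ 0) (ht : algebraMap A F t ≠ 0) :
    Algebra.adjoin K {algebraMap A F s, (algebraMap A F s)⁻¹, algebraMap A F t,
        algebraMap A F p / algebraMap A F t} ≤
      denominatorSubalgebra (Ideal.span {t, p}) s (Ideal.subset_span (Set.mem_insert t {p})) := by
  rw [Algebra.adjoin_le_iff]
  rintro r (rfl | rfl | rfl | rfl)
  · exact ⟨0, 0, s, by simp, by simp⟩
  · exact ⟨1, 0, 1, by simp, by simp [hs]⟩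
  · exact ⟨0, 0, t, by simp, by simp⟩
  · exact ⟨0, 1, p, by simpa using Ideal.subset_span (by simp), by simp [ht]⟩

theorem mul_pow_mul_pow_eq_of_div_pow {A F : Type*} [CommRing A] [Field F] [Algebra A F]
    [IsFractionRing A F] {p q s t f : A} {m a b : ℕ} (hq : algebraMap A F q ≠ 0)
    (h : (algebraMap A F p / algebraMap A F q) ^ m * algebraMap A F s ^ a *
      algebraMap A F t ^ b = algebraMap A F f) :
    p ^ m * s ^ a * t ^ b = f * q ^ m := by
  apply IsFractionRing.injective A F
  simp only [map_mul, map_pow, ← h, div_pow]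
  field_simp

theorem X_zero_add_C_ne_zero {K : Type*} [CommRing K] [Nontrivial K] (l : K) :
    (X 0 + C l : MvPolynomial (Fin 2) K) ≠ 0 := fun h => by
  simpa using congrArg (eval ![1 - l, 0]) h

section Plane

variable {K : Type*} [CommRing K] [IsDomain K]

noncomputable def exchangeIdeal (l₁ l₂ : K) : Ideal (MvPolynomial (Fin 2) K) :=
  Ideal.span {X 1, (X 0 + C l₁) * (X 0 + C l₂)}

theorem X_zero_add_C_not_dvd_X_zero_pow_mul_X_one_pow {l : K} (hl : l ≠ 0) (a c : ℕ) :
    ¬ (X 0 + C l : MvPolynomial (Fin 2) K) ∣ X 0 ^ a * X 1 ^ c := by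
  rintro ⟨g, hg⟩
  simpa [hl] using congrArg (eval ![-l, 1]) hg

theorem X_zero_add_C_pow_mul_X_zero_pow_mul_X_one_pow_notMem {l₁ l₂ : K} (hl₂ : l₂ ≠ 0)
    (hne : l₁ ≠ l₂) (m a b : ℕ) :
    (X 0 + C l₁) ^ m * X 0 ^ a * X 1 ^ b ∉ exchangeIdeal l₁ l₂ ^ (b + 1) := by
  let φ : MvPolynomial (Fin 2) K →ₐ[K] Polynomial K := aeval ![Polynomial.C (-l₂), Polynomial.X]
  have hφ : (exchangeIdeal l₁ l₂).map φ ≤ Ideal.span {Polynomial.X} := by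
    rw [exchangeIdeal, Ideal.map_span, Ideal.span_le]
    rintro _ ⟨p, rfl | rfl, rfl⟩ <;> simp [φ]
  have hval : φ ((X 0 + C l₁) ^ m * X 0 ^ a * X 1 ^ b) =
      Polynomial.C ((l₁ - l₂) ^ m * (-l₂) ^ a) * Polynomial.X ^ b := by
    simp only [φ, map_mul, map_pow, map_add, aeval_X, aeval_C, Matrix.cons_val_zero,
      Matrix.cons_val_one, Polynomial.algebraMap_eq, Polynomial.C_sub, Polynomial.C_neg]
    ring
  intro h
  have hdvd : Polynomial.X ^ (b + 1) ∣ φ ((X 0 + C l₁) ^ m * X 0 ^ a * X 1 ^ b) := by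
    rw [← Ideal.mem_span_singleton, ← Ideal.span_singleton_pow]
    exact Ideal.pow_right_mono hφ _ (Ideal.map_pow φ _ _ ▸ Ideal.mem_map_of_mem φ h)
  have hcoeff := (Polynomial.X_pow_dvd_iff.mp hdvd) b b.lt_succ_self
  rw [hval, Polynomial.coeff_C_mul_X_pow, if_pos rfl] at hcoeff
  simp [sub_ne_zero.mpr hne, hl₂] at hcoeff

end Plane

theorem stmt10_general (K : Type*) [Field K]
    (l₁ l₂ : K) (hl₁ : l₁ ≠ 0) (hl₂ : l₂ ≠ 0) (hne : l₁ ≠ l₂)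
    (F : Type*) [Field F] [Algebra (MvPolynomial (Fin 2) K) F]
    [IsFractionRing (MvPolynomial (Fin 2) K) F]
    [Algebra K F] [IsScalarTower K (MvPolynomial (Fin 2) K) F]
    (x y : F)
    (hx : x = algebraMap (MvPolynomial (Fin 2) K) F (X 0))
    (hy : y = algebraMap (MvPolynomial (Fin 2) K) F (X 1))
    (n : ℤ) (hn : n ≠ 0) :
    ((x + algebraMap K F l₁) / y) ^ n ∉
      Algebra.adjoin K
        {x, x⁻¹, y, (x + algebraMap K F l₁) * (x + algebraMap K F l₂) / y} := by
  subst hx hy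
  have hmap {p : MvPolynomial (Fin 2) K} (hp : p ≠ 0) : algebraMap _ F p ≠ 0 :=
    (map_ne_zero_iff _ (IsFractionRing.injective _ F)).mpr hp
  have hshift (l : K) : algebraMap (MvPolynomial (Fin 2) K) F (X 0) + algebraMap K F l =
      algebraMap (MvPolynomial (Fin 2) K) F (X 0 + C l) := by
    rw [map_add, IsScalarTower.algebraMap_apply K (MvPolynomial (Fin 2) K) F, algebraMap_eq]
  rw [hshift, hshift, ← map_mul]
  intro hmem
  obtain ⟨a, b, f, hf, heq⟩ :=
    adjoin_le_denominatorSubalgebra (hmap (X_ne_zero 0)) (hmap (X_ne_zero 1)) hmem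
  obtain ⟨m, rfl | rfl⟩ := Int.eq_nat_or_neg n
  · rw [zpow_natCast] at heq
    apply X_zero_add_C_pow_mul_X_zero_pow_mul_X_one_pow_notMem hl₂ hne m a b
    rw [mul_pow_mul_pow_eq_of_div_pow (hmap (X_ne_zero 1)) heq]
    exact Ideal.pow_le_pow_right (by omega) (pow_add (exchangeIdeal l₁ l₂) b m ▸
      Ideal.mul_mem_mul hf (Ideal.pow_mem_pow (Ideal.subset_span (Set.mem_insert _ _)) m))
  · rw [zpow_neg, zpow_natCast, ← inv_pow, inv_div] at heq
    have h := mul_pow_mul_pow_eq_of_div_pow (hmap (X_zero_add_C_ne_zero l₁)) heq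
    apply X_zero_add_C_not_dvd_X_zero_pow_mul_X_one_pow hl₁ a (m + b)
    rw [show X 0 ^ a * X 1 ^ (m + b) = f * (X 0 + C l₁) ^ m by rw [← h]; ring]
    exact dvd_mul_of_dvd_right (dvd_pow_self _ (by omega)) f

/-- Let `F` be the fraction field of `K[x,y]` and let `R ⊂ F` be the `K`-subalgebra
generated by `x`, `x⁻¹`, `y` and `(x+λ₁)(x+λ₂)/y`. Then for every nonzero integer `n`,
the element `((x+λ₁)/y)^n` does not belong to `R`. -/
theorem stmt10 (K : Type*) [Field K] [IsAlgClosed K] [CharZero K]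
    (l₁ l₂ : K) (hl₁ : l₁ ≠ 0) (hl₂ : l₂ ≠ 0) (hne : l₁ ≠ l₂)
    (F : Type*) [Field F] [Algebra (MvPolynomial (Fin 2) K) F]
    [IsFractionRing (MvPolynomial (Fin 2) K) F]
    [Algebra K F] [IsScalarTower K (MvPolynomial (Fin 2) K) F]
    (x y : F)
    (hx : x = algebraMap (MvPolynomial (Fin 2) K) F (X 0))
    (hy : y = algebraMap (MvPolynomial (Fin 2) K) F (X 1))
    (n : ℤ) (hn : n ≠ 0) :
    ((x + algebraMap K F l₁) / y) ^ n ∉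
      Algebra.adjoin K
        {x, x⁻¹, y, (x + algebraMap K F l₁) * (x + algebraMap K F l₂) / y} :=
  stmt10_general K l₁ l₂ hl₁ hl₂ hne F x y hx hy n hn
end

section
/- In the ring C = K[T₁,…,T₁₁]/(T₆T₉ − T₁T₂T₇T₈ − T₅T₁₁, T₇T₁₀ − T₁T₄T₈² − T₃T₆T₁₁), the images of the nine variables T₁, T₂, T₃, T₄, T₅, T₆, T₇, T₈, T₁₁ are algebraically independent over K. -/
/-!
On the chart `T₆T₇ ≠ 0` the two relations can be solved for `T₉` and `T₁₀`, so every point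
`(t₁, …, t₈, t₁₁)` with `t₆t₇ ≠ 0` lifts to a point of `Spec C`. Taking the generic such point,
in the fraction field of `K[x₁, …, x₈, x₁₁]`, gives a `K`-algebra map from `C` sending the nine
generators to algebraically independent elements.
-/

open MvPolynomial

theorem algebraicIndependent_quotient_mk_X_of_aeval {R σ ι L : Type*} [CommRing R] [CommRing L]
    [Algebra R L] {s : Set (MvPolynomial σ R)} (j : ι → σ) (g : σ → L)
    (hs : ∀ p ∈ s, aeval g p = 0) (hg : AlgebraicIndependent R (g ∘ j)) :
    AlgebraicIndependent R (fun i => Ideal.Quotient.mk (Ideal.span s) (X (j i))) := by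
  have hker : Ideal.span s ≤ RingHom.ker (aeval g) := Ideal.span_le.2 hs
  refine .of_comp (Ideal.Quotient.liftₐ _ (aeval g) fun p hp => hker hp) ?_
  convert hg using 1
  funext i
  exact aeval_X g (j i)

theorem algebraicIndependent_algebraMap_X_fractionRing (ι R : Type*) [CommRing R] [IsDomain R] :
    AlgebraicIndependent R
      (fun i => algebraMap (MvPolynomial ι R) (FractionRing (MvPolynomial ι R)) (X i)) :=
  (algebraicIndependent_X ι R).map' (f := IsScalarTower.toAlgHom R _ _)
    (IsFractionRing.injective _ _)

/-- The point of `Spec C` over `(t₁, …, t₈, t₁₁) = (x 0, …, x 7, x 8)` on the chart `t₆t₇ ≠ 0`. -/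
noncomputable def chartPoint {L : Type*} [Field L] (x : Fin 9 → L) : Fin 11 → L :=
  ![x 0, x 1, x 2, x 3, x 4, x 5, x 6, x 7,
    (x 0 * x 1 * x 6 * x 7 + x 4 * x 8) / x 5,
    (x 0 * x 3 * x 7 ^ 2 + x 2 * x 5 * x 8) / x 6, x 8]

theorem chartPoint_comp {L : Type*} [Field L] (x : Fin 9 → L) :
    chartPoint x ∘ ![0, 1, 2, 3, 4, 5, 6, 7, 10] = x := by
  funext i
  fin_cases i <;> rfl

theorem aeval_chartPoint_eq_zero {K L : Type*} [CommRing K] [Field L] [Algebra K L]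
    {x : Fin 9 → L} (hx5 : x 5 ≠ 0) (hx6 : x 6 ≠ 0) :
    ∀ p ∈ ({X 5 * X 8 - X 0 * X 1 * X 6 * X 7 - X 4 * X 10,
      X 6 * X 9 - X 0 * X 3 * X 7 ^ 2 - X 2 * X 5 * X 10} : Set (MvPolynomial (Fin 11) K)),
      aeval (chartPoint x) p = 0 := by
  rintro p (rfl | rfl) <;>
  · simp only [map_sub, map_mul, map_pow, aeval_X, chartPoint, Matrix.cons_val,
      mul_div_cancel₀ _ hx5, mul_div_cancel₀ _ hx6]
    ring

theorem stmt12_general (K : Type*) [Field K] :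
    AlgebraicIndependent K
      (fun i : Fin 9 =>
        Ideal.Quotient.mk
          (Ideal.span ({X 5 * X 8 - X 0 * X 1 * X 6 * X 7 - X 4 * X 10,
            X 6 * X 9 - X 0 * X 3 * X 7 ^ 2 - X 2 * X 5 * X 10} :
            Set (MvPolynomial (Fin 11) K)))
          (X ((![0, 1, 2, 3, 4, 5, 6, 7, 10] : Fin 9 → Fin 11) i))) := by
  set x := fun i =>
    algebraMap (MvPolynomial (Fin 9) K) (FractionRing (MvPolynomial (Fin 9) K)) (X i)
  have hx : AlgebraicIndependent K x := algebraicIndependent_algebraMap_X_fractionRing (Fin 9) K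
  refine algebraicIndependent_quotient_mk_X_of_aeval _ _
    (aeval_chartPoint_eq_zero (hx.ne_zero 5) (hx.ne_zero 6)) ?_
  rwa [chartPoint_comp]

/-- In the ring `C = K[T₁,…,T₁₁]/(T₆T₉ − T₁T₂T₇T₈ − T₅T₁₁, T₇T₁₀ − T₁T₄T₈² − T₃T₆T₁₁)`,
the images of the nine variables `T₁, T₂, T₃, T₄, T₅, T₆, T₇, T₈, T₁₁` are algebraically
independent over `K`.  (Variables are indexed from `0`, so `Tᵢ = X (i-1)`.) -/
theorem stmt12 (K : Type*) [Field K] [IsAlgClosed K] [CharZero K] :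
    AlgebraicIndependent K
      (fun i : Fin 9 =>
        Ideal.Quotient.mk
          (Ideal.span ({X 5 * X 8 - X 0 * X 1 * X 6 * X 7 - X 4 * X 10,
            X 6 * X 9 - X 0 * X 3 * X 7 ^ 2 - X 2 * X 5 * X 10} :
            Set (MvPolynomial (Fin 11) K)))
          (X ((![0, 1, 2, 3, 4, 5, 6, 7, 10] : Fin 9 → Fin 11) i))) :=
  stmt12_general K
end

section
/- Let C = K[T₁,…,T₁₁]/(T₆T₉ − T₁T₂T₇T₈ − T₅T₁₁, T₇T₁₀ − T₁T₄T₈² − T₃T₆T₁₁). The localization of C at the powers of the image of the product T₁T₂T₃T₄T₅T₆T₇T₈T₁₁ is isomorphic as a K-algebra to the Laurent polynomial ring in nine variables over K (the group algebra K[ℤ⁹]). -/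
/-!
Once `T₁, …, T₈, T₁₁` are inverted, the two relations solve for the remaining variables,
`T₉ = (T₁T₂T₇T₈ + T₅T₁₁) / T₆` and `T₁₀ = (T₁T₄T₈² + T₃T₆T₁₁) / T₇`, so the localization is
generated by nine units subject to no further relation. Concretely, sending the nine inverted
variables to the coordinate units `t₁, …, t₉` of `K[ℤ⁹]` and `T₉, T₁₀` to the two fractions above
kills both relations and inverts the product, while `tᵢ` ↦ the `i`-th inverted variable gives the
inverse map; both composites fix generators.
-/

open MvPolynomial

section LaurentPolynomials

variable (R : Type*) {S : Type*} [CommSemiring R] [CommSemiring S] [Algebra R S]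
  {ι : Type*} [DecidableEq ι]

noncomputable def laurentVar (i : ι) : (AddMonoidAlgebra R (ι → ℤ))ˣ :=
  (AddMonoidAlgebra.of R (ι → ℤ)).toHomUnits (.ofAdd (Pi.single i 1))

variable [Fintype ι]

theorem toHomUnits_of_ofAdd_eq_prod_laurentVar_zpow (v : ι → ℤ) :
    (AddMonoidAlgebra.of R (ι → ℤ)).toHomUnits (.ofAdd v) = ∏ i, laurentVar R i ^ v i := by
  conv_lhs => rw [← Finset.univ_sum_single v, ofAdd_sum, map_prod]
  refine Finset.prod_congr rfl fun i _ => ?_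
  rw [← mul_one (v i), ← smul_eq_mul, Pi.single_smul' i (v i) (1 : ℤ), ofAdd_zsmul, map_zpow,
    smul_eq_mul, mul_one]
  rfl

variable {R}

theorem algHom_ext_laurentVar {f g : AddMonoidAlgebra R (ι → ℤ) →ₐ[R] S}
    (h : ∀ i : ι, f (laurentVar R i : _) = g (laurentVar R i : _)) : f = g := by
  refine AddMonoidAlgebra.algHom_ext (fun v => ?_) (Subsingleton.elim _ _)
  have hmap (φ : AddMonoidAlgebra R (ι → ℤ) →ₐ[R] S) : φ (AddMonoidAlgebra.single v 1) =
      ↑(∏ i, Units.map (φ : AddMonoidAlgebra R (ι → ℤ) →* S) (laurentVar R i) ^ v i) := by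
    simp_rw [← map_zpow, ← map_prod, ← toHomUnits_of_ofAdd_eq_prod_laurentVar_zpow]
    rfl
  have hunit (i : ι) : Units.map (f : AddMonoidAlgebra R (ι → ℤ) →* S) (laurentVar R i) =
      Units.map (g : AddMonoidAlgebra R (ι → ℤ) →* S) (laurentVar R i) := Units.ext (h i)
  simp only [hmap, hunit]

noncomputable def laurentLift (u : ι → Sˣ) : AddMonoidAlgebra R (ι → ℤ) →ₐ[R] S :=
  AddMonoidAlgebra.lift R S (ι → ℤ) <| (Units.coeHom S).comp
    { toFun := fun v => ∏ i, u i ^ v.toAdd i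
      map_one' := by simp
      map_mul' := fun v w => by simp [zpow_add, Finset.prod_mul_distrib] }

theorem laurentLift_laurentVar (u : ι → Sˣ) (i : ι) :
    laurentLift (R := R) u (laurentVar R i : _) = u i := by
  simp [laurentLift, laurentVar, Pi.single_apply]

end LaurentPolynomials

namespace CubicSurfaceCoxRing

variable (R : Type*) [CommRing R]

-- Variables are indexed from `0`: `X j` is `T_{j+1}`.
abbrev relations : Set (MvPolynomial (Fin 11) R) :=
  {X 5 * X 8 - X 0 * X 1 * X 6 * X 7 - X 4 * X 10,
    X 6 * X 9 - X 0 * X 3 * X 7 ^ 2 - X 2 * X 5 * X 10}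

abbrev coxRing := MvPolynomial (Fin 11) R ⧸ Ideal.span (relations R)

abbrev clusterIndex : Fin 9 → Fin 11 := ![0, 1, 2, 3, 4, 5, 6, 7, 10]

noncomputable abbrev clusterProduct : MvPolynomial (Fin 11) R :=
  X 0 * X 1 * X 2 * X 3 * X 4 * X 5 * X 6 * X 7 * X 10

abbrev localization :=
  Localization.Away (Ideal.Quotient.mk (Ideal.span (relations R)) (clusterProduct R))

abbrev laurentRing := AddMonoidAlgebra R (Fin 9 → ℤ)

theorem clusterProduct_eq_prod : clusterProduct R = ∏ i, X (clusterIndex i) := by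
  simp [Fin.prod_univ_succ, mul_assoc]

noncomputable def T (j : Fin 11) : localization R :=
  algebraMap (coxRing R) (localization R) (Ideal.Quotient.mk _ (X j))

theorem isUnit_T_clusterIndex (i : Fin 9) : IsUnit (T R (clusterIndex i)) :=
  IsLocalization.Away.isUnit_of_dvd _ <| map_dvd _ <|
    clusterProduct_eq_prod R ▸ Finset.dvd_prod_of_mem _ (Finset.mem_univ i)

theorem T_relations : T R 5 * T R 8 = T R 0 * T R 1 * T R 6 * T R 7 + T R 4 * T R 10 ∧
    T R 6 * T R 9 = T R 0 * T R 3 * T R 7 ^ 2 + T R 2 * T R 5 * T R 10 := by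
  have h (p) (hp : p ∈ relations R) :
      algebraMap (coxRing R) (localization R) (Ideal.Quotient.mk _ p) = 0 := by
    rw [Ideal.Quotient.eq_zero_iff_mem.mpr (Ideal.subset_span hp), map_zero]
  have h₁ := h _ (Set.mem_insert _ _)
  have h₂ := h _ (Set.mem_insert_of_mem _ rfl)
  simp only [map_sub, map_mul, map_pow] at h₁ h₂
  simp only [T]
  exact ⟨by linear_combination h₁, by linear_combination h₂⟩

noncomputable def laurentImage : Fin 11 → laurentRing R :=
  let t (i : Fin 9) : laurentRing R := laurentVar R i
  let tInv (i : Fin 9) : laurentRing R := ↑(laurentVar R i)⁻¹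
  ![t 0, t 1, t 2, t 3, t 4, t 5, t 6, t 7,
    (t 0 * t 1 * t 6 * t 7 + t 4 * t 8) * tInv 5,
    (t 0 * t 3 * t 7 ^ 2 + t 2 * t 5 * t 8) * tInv 6,
    t 8]

theorem laurentImage_clusterIndex (i : Fin 9) :
    laurentImage R (clusterIndex i) = laurentVar R i := by
  fin_cases i <;> rfl

theorem span_relations_le_ker :
    Ideal.span (relations R) ≤ RingHom.ker (aeval (R := R) (laurentImage R)) := by
  rw [Ideal.span_le]
  rintro p (rfl | rfl) <;>
  · simp only [SetLike.mem_coe, RingHom.mem_ker, laurentImage, map_sub, map_mul, map_pow, aeval_X,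
      Fin.isValue, Matrix.cons_val, Matrix.cons_val_zero, Matrix.cons_val_one]
    rw [mul_left_comm, Units.mul_inv, mul_one]
    ring

noncomputable def coxRingToLaurent : coxRing R →ₐ[R] laurentRing R :=
  Ideal.Quotient.liftₐ _ (aeval (laurentImage R)) fun _ hp =>
    RingHom.mem_ker.mp (span_relations_le_ker R hp)

theorem coxRingToLaurent_mk (p : MvPolynomial (Fin 11) R) :
    coxRingToLaurent R (Ideal.Quotient.mk _ p) = aeval (laurentImage R) p :=
  Ideal.Quotient.lift_mk _ _ _

theorem isUnit_coxRingToLaurent_clusterProduct :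
    IsUnit (coxRingToLaurent R (Ideal.Quotient.mk _ (clusterProduct R))) := by
  rw [coxRingToLaurent_mk, clusterProduct_eq_prod, map_prod]
  simp only [aeval_X, laurentImage_clusterIndex]
  exact IsUnit.prod_univ_iff.mpr fun i => Units.isUnit _

noncomputable def toLaurent : localization R →ₐ[R] laurentRing R :=
  IsLocalization.Away.liftAlgHom _ (isUnit_coxRingToLaurent_clusterProduct R)

theorem toLaurent_T (j : Fin 11) : toLaurent R (T R j) = laurentImage R j := by
  rw [toLaurent, T, IsLocalization.Away.liftAlgHom_apply, IsLocalization.Away.lift_eq]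
  exact (coxRingToLaurent_mk R _).trans (aeval_X _ _)

noncomputable def ofLaurent : laurentRing R →ₐ[R] localization R :=
  laurentLift fun i => (isUnit_T_clusterIndex R i).unit

theorem ofLaurent_laurentVar (i : Fin 9) :
    ofLaurent R (laurentVar R i) = T R (clusterIndex i) :=
  laurentLift_laurentVar _ i

theorem toLaurent_comp_ofLaurent :
    (toLaurent R).comp (ofLaurent R) = AlgHom.id R (laurentRing R) :=
  algHom_ext_laurentVar fun i => by
    rw [AlgHom.comp_apply, ofLaurent_laurentVar, toLaurent_T, laurentImage_clusterIndex,
      AlgHom.id_apply]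

theorem ofLaurent_laurentVar_inv (i : Fin 9) :
    ofLaurent R ↑(laurentVar R i)⁻¹ = ↑(isUnit_T_clusterIndex R i).unit⁻¹ := by
  have h : Units.map (ofLaurent R : laurentRing R →* localization R) (laurentVar R i) =
      (isUnit_T_clusterIndex R i).unit := Units.ext (ofLaurent_laurentVar R i)
  rw [← h, Units.coe_map_inv]
  rfl

theorem ofLaurent_laurentImage_eight : ofLaurent R (laurentImage R 8) = T R 8 := by
  simp only [laurentImage, Fin.isValue, Matrix.cons_val, map_mul, map_add, ofLaurent_laurentVar,
    Matrix.cons_val_zero, Matrix.cons_val_one, ofLaurent_laurentVar_inv]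
  rw [Units.mul_inv_eq_iff_eq_mul, IsUnit.unit_spec]
  linear_combination (T_relations R).1.symm

theorem ofLaurent_laurentImage_nine : ofLaurent R (laurentImage R 9) = T R 9 := by
  simp only [laurentImage, Fin.isValue, Matrix.cons_val, map_mul, map_add, ofLaurent_laurentVar,
    Matrix.cons_val_zero, map_pow, ofLaurent_laurentVar_inv]
  rw [Units.mul_inv_eq_iff_eq_mul, IsUnit.unit_spec]
  linear_combination (T_relations R).2.symm

theorem ofLaurent_laurentImage (j : Fin 11) : ofLaurent R (laurentImage R j) = T R j := by
  have h (i : Fin 9) : ofLaurent R (laurentImage R (clusterIndex i)) = T R (clusterIndex i) := by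
    rw [laurentImage_clusterIndex, ofLaurent_laurentVar]
  fin_cases j
  exacts [h 0, h 1, h 2, h 3, h 4, h 5, h 6, h 7, ofLaurent_laurentImage_eight R,
    ofLaurent_laurentImage_nine R, h 8]

theorem ofLaurent_comp_toLaurent :
    (ofLaurent R).comp (toLaurent R) = AlgHom.id R (localization R) := by
  apply IsLocalization.algHom_ext
    (Submonoid.powers (Ideal.Quotient.mk _ (clusterProduct R) : coxRing R))
  apply Ideal.Quotient.algHom_ext
  apply MvPolynomial.algHom_ext
  intro j
  exact (congrArg (ofLaurent R) (toLaurent_T R j)).trans (ofLaurent_laurentImage R j)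

end CubicSurfaceCoxRing

open CubicSurfaceCoxRing in
theorem stmt13_general (K : Type*) [Field K] :
    Nonempty
      ((Localization.Away
          (Ideal.Quotient.mk
            (Ideal.span ({X 5 * X 8 - X 0 * X 1 * X 6 * X 7 - X 4 * X 10,
              X 6 * X 9 - X 0 * X 3 * X 7 ^ 2 - X 2 * X 5 * X 10} :
              Set (MvPolynomial (Fin 11) K)))
            (X 0 * X 1 * X 2 * X 3 * X 4 * X 5 * X 6 * X 7 * X 10))) ≃ₐ[K]
        AddMonoidAlgebra K (Fin 9 → ℤ)) :=
  ⟨AlgEquiv.ofAlgHom (toLaurent K) (ofLaurent K) (toLaurent_comp_ofLaurent K)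
    (ofLaurent_comp_toLaurent K)⟩

/-- Let `C = K[T₁,…,T₁₁]/(T₆T₉ − T₁T₂T₇T₈ − T₅T₁₁, T₇T₁₀ − T₁T₄T₈² − T₃T₆T₁₁)`.
The localization of `C` at the powers of the image of `T₁T₂T₃T₄T₅T₆T₇T₈T₁₁` is
isomorphic as a `K`-algebra to the Laurent polynomial ring in nine variables over `K`,
i.e. to the group algebra `K[ℤ⁹]`.  (Variables are indexed from `0`, so `Tᵢ = X (i-1)`.) -/
theorem stmt13 (K : Type*) [Field K] [IsAlgClosed K] [CharZero K] :
    Nonempty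
      ((Localization.Away
          (Ideal.Quotient.mk
            (Ideal.span ({X 5 * X 8 - X 0 * X 1 * X 6 * X 7 - X 4 * X 10,
              X 6 * X 9 - X 0 * X 3 * X 7 ^ 2 - X 2 * X 5 * X 10} :
              Set (MvPolynomial (Fin 11) K)))
            (X 0 * X 1 * X 2 * X 3 * X 4 * X 5 * X 6 * X 7 * X 10))) ≃ₐ[K]
        AddMonoidAlgebra K (Fin 9 → ℤ)) :=
  stmt13_general K
end
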